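/- Let N ≥ 3, m > 2 - 2/N, and α > 0. Then there exist a unique R_* = R_*(α) with 0 < R_* ≤ ∞ and a unique function ψ ∈ C¹([0,R_*)) ∩ C²((0,R_*)) solving ψ''(r) + ((N-1)/r)ψ'(r) = -((m-1)/m)·ψ(r)^{1/(m-1)} for all 0 < r < R_*, with ψ(0) = α and ψ'(0) = 0, such that ψ(r) > 0 and ψ'(r) < 0 for all r ∈ (0,R_*), and if R_* < ∞ then ψ(r) → 0 as r → R_*. -/

import Mathlib

open Real Filter Topology MeasureTheory
open scoped ENNReal

noncomputable section

/-- The Lane–Emden initial value problem for `ψ` on `[0, R)` with `ψ(0) = α`, `ψ'(0) = 0`: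
`ψ'' + ((N-1)/r) ψ' = -((m-1)/m) ψ^{1/(m-1)}`.  The function `ψ'` records the first
derivative, so that `ψ ∈ C¹([0,R)) ∩ C²((0,R))`. -/
def LaneEmden (N : ℕ) (m α : ℝ) (R : ℝ≥0∞) (ψ ψd : ℝ → ℝ) : Prop :=
  ψ 0 = α ∧ ψd 0 = 0 ∧
  (∀ r : ℝ, 0 ≤ r → ENNReal.ofReal r < R → HasDerivAt ψ (ψd r) r) ∧
  ContinuousOn ψd {r : ℝ | 0 ≤ r ∧ ENNReal.ofReal r < R} ∧
  (∀ r : ℝ, 0 < r → ENNReal.ofReal r < R →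
    HasDerivAt ψd (-(((N : ℝ) - 1) / r) * ψd r - ((m - 1) / m) * ψ r ^ (1 / (m - 1))) r)

/-- `ψ > 0` and `ψ' < 0` on `(0, R)`. -/
def LaneEmdenPos (R : ℝ≥0∞) (ψ ψd : ℝ → ℝ) : Prop :=
  ∀ r : ℝ, 0 < r → ENNReal.ofReal r < R → 0 < ψ r ∧ ψd r < 0

/-- If `R < ∞` then `ψ(r) → 0` as `r → R⁻`. -/
def LaneEmdenVanish (R : ℝ≥0∞) (ψ : ℝ → ℝ) : Prop :=
  R < ⊤ → Tendsto ψ (𝓝[<] R.toReal) (𝓝 0)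

/-- Maximality of the existence interval `(0, R)`: every positive decreasing solution that
agrees with `ψ` on the common domain has radius at most `R`. -/
def LaneEmdenMax (N : ℕ) (m α : ℝ) (R : ℝ≥0∞) (ψ ψd : ℝ → ℝ) : Prop :=
  ∀ (R₂ : ℝ≥0∞) (ψ₂ ψ₂d : ℝ → ℝ), LaneEmden N m α R₂ ψ₂ ψ₂d →
    LaneEmdenPos R₂ ψ₂ ψ₂d →
    (∀ r : ℝ, 0 ≤ r → ENNReal.ofReal r < R → ENNReal.ofReal r < R₂ → ψ₂ r = ψ r) →
    R₂ ≤ R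

open scoped NNReal


section LaneEmdenAux

/-- The Lane-Emden nonlinearity. -/
def leF (m : ℝ) (x : ℝ) : ℝ := (m - 1) / m * x ^ (1 / (m - 1))

/-- Real-radius version of the Lane-Emden problem, together with positivity. -/
def Sol (N : ℕ) (m α : ℝ) (b : ℝ) (ψ ψd : ℝ → ℝ) : Prop :=
  ψ 0 = α ∧ ψd 0 = 0 ∧
  (∀ r, 0 ≤ r → r < b → HasDerivAt ψ (ψd r) r) ∧
  ContinuousOn ψd (Set.Ico 0 b) ∧
  (∀ r, 0 < r → r < b → HasDerivAt ψd (-(((N : ℝ) - 1) / r) * ψd r - leF m (ψ r)) r) ∧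
  (∀ r, 0 < r → r < b → 0 < ψ r ∧ ψd r < 0)

variable {N : ℕ} {m α : ℝ}

theorem le_hm1 (hN : 3 ≤ N) (hm : 2 - 2 / (N : ℝ) < m) : 1 < m := by
  have hN3 : (3 : ℝ) ≤ (N : ℝ) := by exact_mod_cast hN
  have h1 : 2 / (N : ℝ) ≤ 2 / 3 := by
    apply div_le_div_of_nonneg_left (by norm_num) (by norm_num) hN3
  nlinarith

theorem leF_cont (hm1 : 1 < m) : Continuous (leF m) := by
  have hp : 0 < 1 / (m - 1) := by
    apply div_pos one_pos; linarith
  have : Continuous fun x : ℝ => x ^ (1 / (m - 1)) := by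
    rw [continuous_iff_continuousAt]
    intro x
    exact Real.continuousAt_rpow_const x _ (Or.inr hp.le)
  exact (continuous_const.mul this : _)

theorem leF_nonneg (hm1 : 1 < m) {x : ℝ} (hx : 0 ≤ x) : 0 ≤ leF m x := by
  have h1 : 0 ≤ (m - 1) / m := by
    apply div_nonneg <;> linarith
  exact mul_nonneg h1 (Real.rpow_nonneg hx _)

theorem leF_pos (hm1 : 1 < m) {x : ℝ} (hx : 0 < x) : 0 < leF m x := by
  have h1 : 0 < (m - 1) / m := by
    apply div_pos <;> linarith
  exact mul_pos h1 (Real.rpow_pos_of_pos hx _)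

theorem leF_mono (hm1 : 1 < m) {x y : ℝ} (h0 : 0 ≤ x) (hxy : x ≤ y) : leF m x ≤ leF m y := by
  have h1 : 0 ≤ (m - 1) / m := by
    apply div_nonneg <;> linarith
  exact mul_le_mul_of_nonneg_left (Real.rpow_le_rpow h0 hxy (by apply div_nonneg <;> linarith)) h1

theorem leF_lip (hm1 : 1 < m) {lo hi : ℝ} (hlo : 0 < lo) :
    ∃ K, 0 ≤ K ∧ ∀ x ∈ Set.Icc lo hi, ∀ y ∈ Set.Icc lo hi,
      |leF m x - leF m y| ≤ K * |x - y| := by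
  rcases le_or_gt hi lo with h | h
  · refine ⟨0, le_refl _, fun x hx y hy => ?_⟩
    have : x = y := le_antisymm (hx.2.trans (h.trans hy.1)) (hy.2.trans (h.trans hx.1))
    simp [this]
  set p := 1 / (m - 1) with hp
  have hp0 : 0 < p := by
    rw [hp]; apply div_pos one_pos; linarith
  set c := (m - 1) / m with hc
  have hc0 : 0 < c := by
    rw [hc]; apply div_pos <;> linarith
  set K := c * p * (lo ^ (p - 1) + hi ^ (p - 1)) with hK
  have hK0 : 0 ≤ K := by
    have h1 : 0 < lo ^ (p - 1) := Real.rpow_pos_of_pos hlo _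
    have h2 : 0 < hi ^ (p - 1) := Real.rpow_pos_of_pos (hlo.trans h) _
    have := mul_pos hc0 hp0
    rw [hK]; nlinarith [mul_pos (mul_pos hc0 hp0) (by linarith : (0:ℝ) < lo ^ (p - 1) + hi ^ (p - 1))]
  refine ⟨K, hK0, fun x hx y hy => ?_⟩
  have hder : ∀ z ∈ Set.Icc lo hi, DifferentiableAt ℝ (leF m) z := by
    intro z hz
    have hz0 : z ≠ 0 := (hlo.trans_le hz.1).ne'
    exact (DifferentiableAt.const_mul ((Real.hasDerivAt_rpow_const (Or.inl hz0)).differentiableAt) c)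
  have hbound : ∀ z ∈ Set.Icc lo hi, ‖deriv (leF m) z‖ ≤ K := by
    intro z hz
    have hz0 : 0 < z := hlo.trans_le hz.1
    have hd : HasDerivAt (leF m) (c * (p * z ^ (p - 1))) z := by
      exact (Real.hasDerivAt_rpow_const (Or.inl hz0.ne')).const_mul c
    rw [hd.deriv]
    have hzp : 0 < z ^ (p - 1) := Real.rpow_pos_of_pos hz0 _
    have hb : z ^ (p - 1) ≤ lo ^ (p - 1) + hi ^ (p - 1) := by
      rcases le_or_gt 1 p with hp1 | hp1
      · have : z ^ (p - 1) ≤ hi ^ (p - 1) :=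
          Real.rpow_le_rpow hz0.le hz.2 (by linarith)
        have hlop : 0 ≤ lo ^ (p - 1) := (Real.rpow_pos_of_pos hlo _).le
        linarith
      · have : z ^ (p - 1) ≤ lo ^ (p - 1) := by
          apply Real.rpow_le_rpow_of_nonpos hlo hz.1 (by linarith)
        have hhip : 0 ≤ hi ^ (p - 1) := (Real.rpow_pos_of_pos (hlo.trans h) _).le
        linarith
    rw [Real.norm_eq_abs, abs_of_nonneg (by positivity)]
    calc c * (p * z ^ (p - 1)) = c * p * z ^ (p - 1) := by ring
    _ ≤ c * p * (lo ^ (p - 1) + hi ^ (p - 1)) := by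
        apply mul_le_mul_of_nonneg_left hb (by positivity)
  have := Convex.norm_image_sub_le_of_norm_deriv_le hder hbound (convex_Icc lo hi) hx hy
  simpa [Real.norm_eq_abs, abs_sub_comm] using this

theorem alg1 (k : ℕ) {r A fv ψdv : ℝ} (hr : r ≠ 0) (hψdv : ψdv = (r ^ (k + 2))⁻¹ * A) :
    -(((k + 2 : ℕ) : ℝ) * r ^ (k + 1)) / (r ^ (k + 2)) ^ 2 * A
      + (r ^ (k + 2))⁻¹ * (-(r ^ (k + 2) * fv))
      = -(((k + 2 : ℕ) : ℝ) / r) * ψdv - fv := by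
  subst hψdv
  field_simp
  ring

end LaneEmdenAux

section LaneEmdenAux2
variable {N : ℕ} {m : ℝ}

set_option maxHeartbeats 1600000 in
theorem contraction_step (hN : 3 ≤ N) (hm1 : 1 < m)
    {r₀ a ψ₀ c₀ ρ lo hi M K H : ℝ}
    (hr₀ : 0 ≤ r₀) (ha : 0 < a) (hreg : 0 < r₀ ∨ c₀ = 0) (hc₀ : c₀ ≤ 0)
    (hρ : 0 < ρ) (hlo : 0 < lo) (hlo' : lo ≤ ψ₀ - ρ) (hhi : ψ₀ + ρ ≤ hi)
    (hM : ∀ x ∈ Set.Icc lo hi, |leF m x| ≤ M)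
    (hK : 0 ≤ K)
    (hKf : ∀ x ∈ Set.Icc lo hi, ∀ y ∈ Set.Icc lo hi, |leF m x - leF m y| ≤ K * |x - y|)
    (hH : ∀ s ∈ Set.Icc r₀ (r₀ + a), (s ^ (N - 1))⁻¹ * |c₀| + M * (s - r₀) ≤ H)
    (hHa : H * a ≤ ρ) (hq : K * a ^ 2 ≤ 2⁻¹) :
    ∃ ψ ψd : ℝ → ℝ,
      ψ r₀ = ψ₀ ∧
      (∀ r ∈ Set.Icc r₀ (r₀ + a), ψ₀ - ρ ≤ ψ r ∧ ψ r ≤ ψ₀ + ρ) ∧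
      (∀ r, HasDerivAt ψ (ψd r) r) ∧
      Continuous ψd ∧
      (∀ r ∈ Set.Icc r₀ (r₀ + a),
        r ^ (N - 1) * ψd r = c₀ - ∫ τ in r₀..r, τ ^ (N - 1) * leF m (ψ τ)) ∧
      (∀ r ∈ Set.Ioo r₀ (r₀ + a),
        HasDerivAt ψd (-(((N : ℝ) - 1) / r) * ψd r - leF m (ψ r)) r) ∧
      (0 < r₀ →
        HasDerivWithinAt ψd (-(((N : ℝ) - 1) / r₀) * ψd r₀ - leF m (ψ r₀)) (Set.Ici r₀) r₀) ∧
      (∀ r ∈ Set.Ioc r₀ (r₀ + a), ψd r < 0) ∧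
      ψd r₀ = (r₀ ^ (N - 1))⁻¹ * c₀ := by
  obtain ⟨k, rfl⟩ : ∃ k, N = k + 3 := ⟨N - 3, by omega⟩
  have hNsub : k + 3 - 1 = k + 2 := rfl
  have hcast : ((k + 3 : ℕ) : ℝ) - 1 = ((k + 2 : ℕ) : ℝ) := by push_cast; ring
  simp only [hNsub] at hH ⊢
  have hle : r₀ ≤ r₀ + a := by linarith
  set I : Set ℝ := Set.Icc r₀ (r₀ + a) with hI
  have hM0 : 0 ≤ M := le_trans (abs_nonneg _) (hM lo ⟨le_refl _, by linarith⟩)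
  have hH0 : 0 ≤ H := by
    have h0 := hH r₀ ⟨le_refl _, hle⟩
    have h1 : 0 ≤ (r₀ ^ (k + 2))⁻¹ * |c₀| := by positivity
    simp only [sub_self, mul_zero, add_zero] at h0
    linarith
  have hsub : Set.Icc (ψ₀ - ρ) (ψ₀ + ρ) ⊆ Set.Icc lo hi := Set.Icc_subset_Icc hlo' hhi
  set cl : ℝ → ℝ := fun r => max r₀ (min (r₀ + a) r) with hcl
  have hclmem : ∀ r, cl r ∈ I := by
    intro r
    constructor
    · exact le_max_left _ _
    · simp only [hcl, max_le_iff]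
      exact ⟨hle, min_le_left _ _⟩
  have hclid : ∀ r ∈ I, cl r = r := by
    intro r hr
    simp only [hcl]
    rw [min_eq_right hr.2, max_eq_right hr.1]
  have hclcont : Continuous cl := continuous_const.max (continuous_const.min continuous_id)
  -- the closed ball in C(I, ℝ)
  set cb : Set C(I, ℝ) := Metric.closedBall (ContinuousMap.const I ψ₀) ρ with hcb
  haveI hcomp : CompleteSpace cb := (Metric.isClosed_closedBall).completeSpace_coe
  haveI hne : Nonempty cb := ⟨⟨ContinuousMap.const I ψ₀, Metric.mem_closedBall_self hρ.le⟩⟩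
  -- extension of an element of the ball
  set ew : cb → ℝ → ℝ := fun w => Set.IccExtend hle ⇑(w : C(I, ℝ)) with hew
  have hewc : ∀ w, Continuous (ew w) := fun w => (w : C(I, ℝ)).continuous.comp continuous_projIcc
  have hewmem : ∀ w τ, ew w τ ∈ Set.Icc (ψ₀ - ρ) (ψ₀ + ρ) := by
    intro w τ
    have h1 : dist ((w : C(I, ℝ)) (Set.projIcc r₀ (r₀ + a) hle τ))
        ((ContinuousMap.const I ψ₀) (Set.projIcc r₀ (r₀ + a) hle τ)) ≤
        dist (w : C(I, ℝ)) (ContinuousMap.const I ψ₀) := ContinuousMap.dist_apply_le_dist _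
    have h2 : dist (w : C(I, ℝ)) (ContinuousMap.const I ψ₀) ≤ ρ := w.2
    have h3 : |ew w τ - ψ₀| ≤ ρ := by
      rw [hew]
      simp only [Set.IccExtend]
      rw [← Real.dist_eq]
      exact le_trans h1 h2
    rcases abs_le.1 h3 with ⟨h4, h5⟩
    exact ⟨by linarith, by linarith⟩
  have hewlohi : ∀ w τ, ew w τ ∈ Set.Icc lo hi := fun w τ => hsub (hewmem w τ)
  -- the integrand and primitive
  set gint : cb → ℝ → ℝ := fun w τ => τ ^ (k + 2) * leF m (ew w τ) with hgint
  have hgintc : ∀ w, Continuous (gint w) := fun w =>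
    (continuous_pow _).mul ((leF_cont hm1).comp (hewc w))
  set Fw : cb → ℝ → ℝ := fun w s => ∫ τ in r₀..s, gint w τ with hFw
  have hFwd : ∀ w s, HasDerivAt (Fw w) (gint w s) s := fun w s =>
    intervalIntegral.integral_hasDerivAt_right ((hgintc w).intervalIntegrable _ _)
      ((hgintc w).stronglyMeasurableAtFilter _ _) (hgintc w).continuousAt
  have hFwc : ∀ w, Continuous (Fw w) := fun w =>
    intervalIntegral.continuous_primitive (fun a b => (hgintc w).intervalIntegrable a b) r₀
  have hFwbound : ∀ w, ∀ s ∈ I, |Fw w s| ≤ M * s ^ (k + 2) * (s - r₀) := by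
    intro w s hs
    have hs0 : 0 ≤ s := le_trans hr₀ hs.1
    have hb : ∀ τ ∈ Set.uIoc r₀ s, ‖gint w τ‖ ≤ M * s ^ (k + 2) := by
      intro τ hτ
      rw [Set.uIoc_of_le hs.1] at hτ
      have hτ0 : 0 ≤ τ := le_trans hr₀ hτ.1.le
      rw [Real.norm_eq_abs, hgint, abs_mul, abs_pow, abs_of_nonneg hτ0]
      calc τ ^ (k + 2) * |leF m (ew w τ)| ≤ s ^ (k + 2) * M := by
            apply mul_le_mul (pow_le_pow_left₀ hτ0 hτ.2 _) (hM _ (hewlohi w τ))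
              (abs_nonneg _) (by positivity)
        _ = M * s ^ (k + 2) := by ring
    have := intervalIntegral.norm_integral_le_of_norm_le_const hb
    rw [Real.norm_eq_abs] at this
    rw [abs_of_nonneg (by linarith [hs.1] : (0:ℝ) ≤ s - r₀)] at this
    exact this
  -- the singular quotient
  set hw : cb → ℝ → ℝ := fun w s => (s ^ (k + 2))⁻¹ * (c₀ - Fw w s) with hhw
  have hwbound : ∀ w, ∀ s ∈ I, |hw w s| ≤ H := by
    intro w s hs
    have hs0 : 0 ≤ s := le_trans hr₀ hs.1
    have h1 : (0:ℝ) ≤ (s ^ (k + 2))⁻¹ := by positivity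
    have h2 : |hw w s| ≤ (s ^ (k + 2))⁻¹ * (|c₀| + M * s ^ (k + 2) * (s - r₀)) := by
      rw [hhw]
      simp only [abs_mul, abs_inv, abs_pow, abs_of_nonneg hs0]
      apply mul_le_mul_of_nonneg_left _ h1
      calc |c₀ - Fw w s| ≤ |c₀| + |Fw w s| := abs_sub _ _
        _ ≤ |c₀| + M * s ^ (k + 2) * (s - r₀) := by linarith [hFwbound w s hs]
    have h3 : (s ^ (k + 2))⁻¹ * (s ^ (k + 2)) ≤ 1 := inv_mul_le_one
    have h4 : 0 ≤ M * (s - r₀) := mul_nonneg hM0 (by linarith [hs.1])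
    calc |hw w s| ≤ (s ^ (k + 2))⁻¹ * (|c₀| + M * s ^ (k + 2) * (s - r₀)) := h2
      _ = (s ^ (k + 2))⁻¹ * |c₀| + ((s ^ (k + 2))⁻¹ * s ^ (k + 2)) * (M * (s - r₀)) := by ring
      _ ≤ (s ^ (k + 2))⁻¹ * |c₀| + 1 * (M * (s - r₀)) := by nlinarith
      _ = (s ^ (k + 2))⁻¹ * |c₀| + M * (s - r₀) := by ring
      _ ≤ H := hH s hs
  have hwcontAt : ∀ w, ∀ s : ℝ, s ≠ 0 → ContinuousAt (hw w) s := by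
    intro w s hs
    exact (((continuous_pow (k + 2)).continuousAt).inv₀ (pow_ne_zero _ hs)).mul
      ((continuous_const.sub (hFwc w)).continuousAt)
  have hwcont0 : r₀ = 0 → c₀ = 0 → ∀ w, ContinuousAt (hw w) 0 := by
    intro hr00 hc0 w
    have hb : ∀ t : ℝ, ‖hw w t‖ ≤ M * |t| := by
      intro t
      have hFb : |Fw w t| ≤ (M * |t| ^ (k + 2)) * |t - r₀| := by
        have hb2 : ∀ τ ∈ Set.uIoc r₀ t, ‖gint w τ‖ ≤ M * |t| ^ (k + 2) := by
          intro τ hτ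
          have hτabs : |τ| ≤ |t| := by
            rw [hr00] at hτ
            rcases le_total 0 t with h | h
            · rw [Set.uIoc_of_le h] at hτ
              rw [abs_of_pos hτ.1, abs_of_nonneg h]; exact hτ.2
            · rw [Set.uIoc_of_ge h] at hτ
              rw [abs_of_nonpos hτ.2, abs_of_nonpos h]; linarith [hτ.1]
          rw [Real.norm_eq_abs, hgint, abs_mul, abs_pow]
          calc |τ| ^ (k + 2) * |leF m (ew w τ)| ≤ |t| ^ (k + 2) * M := by
                apply mul_le_mul (pow_le_pow_left₀ (abs_nonneg _) hτabs _)
                  (hM _ (hewlohi w τ)) (abs_nonneg _) (by positivity)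
            _ = M * |t| ^ (k + 2) := by ring
        have := intervalIntegral.norm_integral_le_of_norm_le_const hb2
        rwa [Real.norm_eq_abs] at this
      rw [hr00, sub_zero] at hFb
      have h2 : ‖hw w t‖ = (|t| ^ (k + 2))⁻¹ * |Fw w t| := by
        simp only [Real.norm_eq_abs, hhw, hc0, zero_sub, abs_mul, abs_inv, abs_pow, abs_neg]
      rw [h2]
      have h3 : (|t| ^ (k + 2))⁻¹ * |Fw w t| ≤ (|t| ^ (k + 2))⁻¹ * (M * |t| ^ (k + 2) * |t|) := by
        apply mul_le_mul_of_nonneg_left _ (by positivity)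
        exact hFb
      have h4 : (|t| ^ (k + 2))⁻¹ * |t| ^ (k + 2) ≤ 1 := inv_mul_le_one
      have h5 : 0 ≤ M * |t| := by positivity
      nlinarith [h3]
    have h0 : hw w 0 = 0 := by
      have hF0 : Fw w 0 = 0 := by rw [hFw]; simp [hr00]
      simp [hhw, hF0, hc0, zero_pow (by omega : k + 2 ≠ 0)]
    rw [ContinuousAt, h0]
    apply squeeze_zero_norm hb
    have : Tendsto (fun t : ℝ => M * |t|) (𝓝 0) (𝓝 (M * |(0:ℝ)|)) :=
      (continuous_const.mul continuous_abs).tendsto 0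
    simpa using this
  -- the clamped integrand
  set g : cb → ℝ → ℝ := fun w => hw w ∘ cl with hg
  have hgc : ∀ w, Continuous (g w) := by
    intro w
    rw [continuous_iff_continuousAt]
    intro s
    apply ContinuousAt.comp _ hclcont.continuousAt
    rcases hreg with hr0p | hc00
    · exact hwcontAt w _ (ne_of_gt (lt_of_lt_of_le hr0p (hclmem s).1))
    · rcases eq_or_ne (cl s) 0 with h | h
      · rw [h]
        have hr00 : r₀ = 0 := le_antisymm (by rw [← h]; exact (hclmem s).1) hr₀
        exact hwcont0 hr00 hc00 w
      · exact hwcontAt w _ h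
  have hgbound : ∀ w τ, |g w τ| ≤ H := fun w τ => hwbound w _ (hclmem τ)
  have hgval : ∀ w, ∀ r ∈ I, g w r = hw w r := by
    intro w r hr; show hw w (cl r) = hw w r; rw [hclid r hr]
  -- the operator
  set Tfun : cb → C(I, ℝ) := fun w =>
    ⟨fun t => ψ₀ + ∫ τ in r₀..(t : ℝ), g w τ,
      continuous_const.add ((intervalIntegral.continuous_primitive
        (fun a b => (hgc w).intervalIntegrable a b) r₀).comp continuous_subtype_val)⟩ with hTfun
  have hTmem : ∀ w, Tfun w ∈ cb := by
    intro w
    rw [hcb, Metric.mem_closedBall]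
    rw [ContinuousMap.dist_le hρ.le]
    intro t
    have h1 : dist (Tfun w t) ((ContinuousMap.const I ψ₀) t) = |∫ τ in r₀..(t : ℝ), g w τ| := by
      rw [Real.dist_eq]
      simp [hTfun]
    rw [h1]
    have hb' : ∀ τ' ∈ Set.uIoc r₀ (t : ℝ), ‖g w τ'‖ ≤ H := fun τ' _ => by
      rw [Real.norm_eq_abs]; exact hgbound w τ'
    have h2 := intervalIntegral.norm_integral_le_of_norm_le_const hb'
    rw [Real.norm_eq_abs] at h2
    have h3 : |(t : ℝ) - r₀| ≤ a := by
      rcases t.2 with ⟨ht1, ht2⟩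
      rw [abs_le]; constructor <;> linarith
    calc |∫ τ in r₀..(t : ℝ), g w τ| ≤ H * |(t : ℝ) - r₀| := h2
      _ ≤ H * a := mul_le_mul_of_nonneg_left h3 hH0
      _ ≤ ρ := hHa
  set T : cb → cb := fun w => ⟨Tfun w, hTmem w⟩ with hT
  -- contraction estimate
  have hew_diff : ∀ (x y : cb) τ, |ew x τ - ew y τ| ≤ dist (x : C(I, ℝ)) (y : C(I, ℝ)) := by
    intro x y τ
    rw [← Real.dist_eq]
    exact ContinuousMap.dist_apply_le_dist _
  have hg_diff : ∀ (x y : cb) (τ : ℝ),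
      |g x τ - g y τ| ≤ K * dist (x : C(I, ℝ)) (y : C(I, ℝ)) * a := by
    intro x y τ
    set d := dist (x : C(I, ℝ)) (y : C(I, ℝ)) with hd
    have hd0 : 0 ≤ d := dist_nonneg
    set s := cl τ with hs
    have hsI : s ∈ I := hclmem τ
    have hs0 : 0 ≤ s := le_trans hr₀ hsI.1
    have hFdiff : |Fw x s - Fw y s| ≤ s ^ (k + 2) * (K * d) * (s - r₀) := by
      have heq : Fw x s - Fw y s = ∫ τ' in r₀..s, (gint x τ' - gint y τ') :=
        (intervalIntegral.integral_sub ((hgintc x).intervalIntegrable _ _)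
          ((hgintc y).intervalIntegrable _ _)).symm
      rw [heq]
      have hb : ∀ τ' ∈ Set.uIoc r₀ s, ‖gint x τ' - gint y τ'‖ ≤ s ^ (k + 2) * (K * d) := by
        intro τ' hτ'
        rw [Set.uIoc_of_le hsI.1] at hτ'
        have hτ'0 : 0 ≤ τ' := le_trans hr₀ hτ'.1.le
        have h1 : gint x τ' - gint y τ' = τ' ^ (k + 2) * (leF m (ew x τ') - leF m (ew y τ')) := by
          rw [hgint]; ring
        rw [Real.norm_eq_abs, h1, abs_mul, abs_pow, abs_of_nonneg hτ'0]
        apply mul_le_mul (pow_le_pow_left₀ hτ'0 hτ'.2 _)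
        · calc |leF m (ew x τ') - leF m (ew y τ')| ≤ K * |ew x τ' - ew y τ'| :=
                hKf _ (hewlohi x τ') _ (hewlohi y τ')
            _ ≤ K * d := mul_le_mul_of_nonneg_left (hew_diff x y τ') hK
        · exact abs_nonneg _
        · positivity
      have h2 := intervalIntegral.norm_integral_le_of_norm_le_const hb
      rw [Real.norm_eq_abs, abs_of_nonneg (by linarith [hsI.1] : (0:ℝ) ≤ s - r₀)] at h2
      exact h2
    have h2 : g x τ - g y τ = (s ^ (k + 2))⁻¹ * (Fw y s - Fw x s) := by
      show hw x (cl τ) - hw y (cl τ) = _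
      rw [← hs, hhw]; ring
    rw [h2, abs_mul, abs_inv, abs_pow, abs_of_nonneg hs0]
    have h3 : |Fw y s - Fw x s| ≤ s ^ (k + 2) * (K * d) * a := by
      rw [abs_sub_comm]
      calc |Fw x s - Fw y s| ≤ s ^ (k + 2) * (K * d) * (s - r₀) := hFdiff
        _ ≤ s ^ (k + 2) * (K * d) * a := by
            apply mul_le_mul_of_nonneg_left (by linarith [hsI.2]) (by positivity)
    have h4 : (s ^ (k + 2))⁻¹ * s ^ (k + 2) ≤ 1 := inv_mul_le_one
    have h5 : (0:ℝ) ≤ (s ^ (k + 2))⁻¹ := by positivity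
    calc (s ^ (k + 2))⁻¹ * |Fw y s - Fw x s| ≤ (s ^ (k + 2))⁻¹ * (s ^ (k + 2) * (K * d) * a) :=
          mul_le_mul_of_nonneg_left h3 h5
      _ = ((s ^ (k + 2))⁻¹ * s ^ (k + 2)) * (K * d * a) := by ring
      _ ≤ 1 * (K * d * a) := by
          apply mul_le_mul_of_nonneg_right h4 (by positivity)
      _ = K * d * a := by ring
  have hcontr : ContractingWith (2⁻¹ : ℝ≥0) T := by
    constructor
    · rw [← NNReal.coe_lt_coe]; norm_num
    · apply LipschitzWith.of_dist_le_mul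
      intro x y
      rw [Subtype.dist_eq, hT]
      show dist (Tfun x) (Tfun y) ≤ _
      have hcoe : ((2⁻¹ : ℝ≥0) : ℝ) = 2⁻¹ := by simp
      rw [hcoe]
      set d := dist (x : C(I, ℝ)) (y : C(I, ℝ)) with hd
      have hd0 : 0 ≤ d := dist_nonneg
      have hdd : dist x y = d := Subtype.dist_eq x y
      rw [ContinuousMap.dist_le (by rw [hdd]; positivity)]
      intro t
      have h1 : Tfun x t - Tfun y t = ∫ τ in r₀..(t : ℝ), (g x τ - g y τ) := by
        simp only [hTfun, ContinuousMap.coe_mk]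
        rw [intervalIntegral.integral_sub ((hgc x).intervalIntegrable _ _)
          ((hgc y).intervalIntegrable _ _)]
        ring
      rw [Real.dist_eq, h1]
      have hb' : ∀ τ' ∈ Set.uIoc r₀ (t : ℝ), ‖g x τ' - g y τ'‖ ≤ K * d * a := fun τ' _ => by
        rw [Real.norm_eq_abs]; exact hg_diff x y τ'
      have h2 := intervalIntegral.norm_integral_le_of_norm_le_const hb'
      rw [Real.norm_eq_abs] at h2
      have h3 : |(t : ℝ) - r₀| ≤ a := by
        rcases t.2 with ⟨ht1, ht2⟩
        rw [abs_le]; constructor <;> linarith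
      calc |∫ τ in r₀..(t : ℝ), (g x τ - g y τ)| ≤ (K * d * a) * |(t : ℝ) - r₀| := h2
        _ ≤ (K * d * a) * a := mul_le_mul_of_nonneg_left h3 (by positivity)
        _ = (K * a ^ 2) * d := by ring
        _ ≤ 2⁻¹ * d := mul_le_mul_of_nonneg_right hq hd0
        _ = 2⁻¹ * dist x y := by rw [hdd]
  -- the fixed point
  set w' : cb := hcontr.fixedPoint T with hw'
  have hfp : T w' = w' := hcontr.fixedPoint_isFixedPt
  set ψ : ℝ → ℝ := fun r => ψ₀ + ∫ τ in r₀..r, g w' τ with hψdef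
  set ψd : ℝ → ℝ := g w' with hψd
  have hTval : Tfun w' = (w' : C(I, ℝ)) := congrArg Subtype.val hfp
  have hψval : ∀ t (ht : t ∈ I), ψ t = (w' : C(I, ℝ)) ⟨t, ht⟩ := by
    intro t ht
    have := ContinuousMap.congr_fun hTval ⟨t, ht⟩
    simpa [hTfun, hψdef] using this
  have hew_eq : ∀ t (ht : t ∈ I), ew w' t = ψ t := by
    intro t ht
    rw [hψval t ht, hew]
    exact Set.IccExtend_of_mem hle _ ht
  have hψball : ∀ r ∈ I, ψ₀ - ρ ≤ ψ r ∧ ψ r ≤ ψ₀ + ρ := by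
    intro r hr
    rw [← hew_eq r hr]
    exact ⟨(hewmem w' r).1, (hewmem w' r).2⟩
  have hψder : ∀ r, HasDerivAt ψ (ψd r) r := by
    intro r
    have h1 : HasDerivAt (fun u => ∫ τ in r₀..u, g w' τ) (g w' r) r :=
      intervalIntegral.integral_hasDerivAt_right ((hgc w').intervalIntegrable _ _)
        ((hgc w').stronglyMeasurableAtFilter _ _) (hgc w').continuousAt
    exact h1.const_add ψ₀
  have hψdval : ∀ r ∈ I, ψd r = (r ^ (k + 2))⁻¹ * (c₀ - Fw w' r) := by
    intro r hr
    rw [hψd, hgval w' r hr, hhw]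
  have hFeq : ∀ r ∈ I, Fw w' r = ∫ τ in r₀..r, τ ^ (k + 2) * leF m (ψ τ) := by
    intro r hr
    apply intervalIntegral.integral_congr
    intro τ hτ
    rw [Set.uIcc_of_le hr.1] at hτ
    have hτI : τ ∈ I := ⟨hτ.1, le_trans hτ.2 hr.2⟩
    simp only [hgint]
    rw [hew_eq τ hτI]
  have hident : ∀ r ∈ I, r ^ (k + 2) * ψd r = c₀ - ∫ τ in r₀..r, τ ^ (k + 2) * leF m (ψ τ) := by
    intro r hr
    rw [hψdval r hr, ← hFeq r hr]
    rcases eq_or_lt_of_le (le_trans hr₀ hr.1) with h0 | h0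
    · subst h0
      have hr00 : r₀ = 0 := le_antisymm hr.1 hr₀
      have hc00 : c₀ = 0 := by
        rcases hreg with h | h
        · rw [hr00] at h; exact absurd h (lt_irrefl 0)
        · exact h
      have hFw0 : Fw w' 0 = 0 := by
        simp only [hFw, hr00]
        exact intervalIntegral.integral_same
      rw [hFw0, hc00, zero_pow (by omega : k + 2 ≠ 0)]
      ring
    · field_simp
  have hd_interior : ∀ r : ℝ, r ≠ 0 → HasDerivAt (hw w')
      (-(((k + 2 : ℕ) : ℝ) * r ^ (k + 1)) / (r ^ (k + 2)) ^ 2 * (c₀ - Fw w' r)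
        + (r ^ (k + 2))⁻¹ * (-(gint w' r))) r := by
    intro r hrne
    have hd1 : HasDerivAt (fun s : ℝ => (s ^ (k + 2))⁻¹)
        (-(((k + 2 : ℕ) : ℝ) * r ^ (k + 1)) / (r ^ (k + 2)) ^ 2) r := by
      have h0 := (hasDerivAt_pow (k + 2) r).inv (pow_ne_zero _ hrne)
      exact h0
    have hd2 : HasDerivAt (fun s => c₀ - Fw w' s) (-(gint w' r)) r := (hFwd w' r).const_sub c₀
    have h3 := hd1.mul hd2
    have h4 : hw w' = fun s => (s ^ (k + 2))⁻¹ * (c₀ - Fw w' s) := by rw [hhw]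
    rw [h4]
    exact h3
  have hvalconv : ∀ r (hrI : r ∈ I), r ≠ 0 →
      (-(((k + 2 : ℕ) : ℝ) * r ^ (k + 1)) / (r ^ (k + 2)) ^ 2 * (c₀ - Fw w' r)
        + (r ^ (k + 2))⁻¹ * (-(gint w' r)))
      = -((((k + 3 : ℕ) : ℝ) - 1) / r) * ψd r - leF m (ψ r) := by
    intro r hrI hrne
    have h1 : gint w' r = r ^ (k + 2) * leF m (ψ r) := by
      simp only [hgint]
      rw [hew_eq r hrI]
    rw [h1, hcast]
    exact alg1 k hrne (hψdval r hrI)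
  refine ⟨ψ, ψd, ?_, hψball, hψder, (hgc w'), hident, ?_, ?_, ?_, ?_⟩
  · rw [hψdef]; simp
  · intro r hr
    have hrI : r ∈ I := Set.Ioo_subset_Icc_self hr
    have hr0 : 0 < r := lt_of_le_of_lt hr₀ hr.1
    have heq : ψd =ᶠ[𝓝 r] hw w' := by
      filter_upwards [isOpen_Ioo.mem_nhds hr] with y hy
      exact hgval w' y (Set.Ioo_subset_Icc_self hy)
    have h6 := (hd_interior r hr0.ne').congr_of_eventuallyEq heq
    rw [hvalconv r hrI hr0.ne'] at h6
    exact h6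
  · intro hr0p
    have hr₀I : r₀ ∈ I := ⟨le_refl _, hle⟩
    have h7 : HasDerivWithinAt (hw w')
        (-(((k + 2 : ℕ) : ℝ) * r₀ ^ (k + 1)) / (r₀ ^ (k + 2)) ^ 2 * (c₀ - Fw w' r₀)
          + (r₀ ^ (k + 2))⁻¹ * (-(gint w' r₀))) (Set.Icc r₀ (r₀ + a)) r₀ :=
      (hd_interior r₀ hr0p.ne').hasDerivWithinAt
    have h8 : HasDerivWithinAt ψd
        (-(((k + 2 : ℕ) : ℝ) * r₀ ^ (k + 1)) / (r₀ ^ (k + 2)) ^ 2 * (c₀ - Fw w' r₀)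
          + (r₀ ^ (k + 2))⁻¹ * (-(gint w' r₀))) (Set.Icc r₀ (r₀ + a)) r₀ :=
      h7.congr (fun y hy => hgval w' y hy) (hgval w' r₀ hr₀I)
    have hmem : Set.Icc r₀ (r₀ + a) ∈ 𝓝[Set.Ici r₀] r₀ := by
      rw [mem_nhdsWithin]
      exact ⟨Set.Iio (r₀ + a), isOpen_Iio, by simpa using ha, fun y hy => ⟨hy.2, hy.1.le⟩⟩
    have h9 := h8.mono_of_mem_nhdsWithin hmem
    rw [hvalconv r₀ hr₀I hr0p.ne'] at h9
    exact h9
  · intro r hr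
    have hrI : r ∈ I := ⟨hr.1.le, hr.2⟩
    have hr0 : 0 < r := lt_of_le_of_lt hr₀ hr.1
    have hFpos : 0 < Fw w' r := by
      rw [hFeq r hrI]
      apply intervalIntegral.intervalIntegral_pos_of_pos_on
      · apply ContinuousOn.intervalIntegrable
        apply Continuous.continuousOn
        have hψc : Continuous ψ := by
          rw [hψdef]
          exact continuous_const.add (intervalIntegral.continuous_primitive
            (fun a b => (hgc w').intervalIntegrable a b) r₀)
        exact (continuous_pow _).mul ((leF_cont hm1).comp hψc)
      · intro τ hτ
        have hτI : τ ∈ I := ⟨hτ.1.le, le_trans hτ.2.le hr.2⟩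
        have hτ0 : 0 < τ := lt_of_le_of_lt hr₀ hτ.1
        apply mul_pos (pow_pos hτ0 _)
        apply leF_pos hm1
        have := (hψball τ hτI).1
        linarith
      · exact hr.1
    have h10 := hψdval r hrI
    rw [h10]
    apply mul_neg_of_pos_of_neg
    · exact inv_pos.2 (pow_pos hr0 _)
    · linarith
  · have hr₀I : r₀ ∈ I := ⟨le_refl _, hle⟩
    rw [hψdval r₀ hr₀I]
    have hF0 : Fw w' r₀ = 0 := intervalIntegral.integral_same
    rw [hF0, sub_zero]

end LaneEmdenAux2

section LaneEmdenAux3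
variable {N : ℕ} {m α : ℝ} {b : ℝ} {ψ ψd : ℝ → ℝ}

theorem sol_contAt (hs : Sol N m α b ψ ψd) {r : ℝ} (h0 : 0 ≤ r) (hrb : r < b) :
    ContinuousAt ψ r := (hs.2.2.1 r h0 hrb).continuousAt

theorem sol_contOn (hs : Sol N m α b ψ ψd) {r : ℝ} (hrb : r < b) :
    ContinuousOn ψ (Set.Icc 0 r) := fun x hx =>
  (sol_contAt hs hx.1 (lt_of_le_of_lt hx.2 hrb)).continuousWithinAt

theorem sol_identity (hN : 3 ≤ N) (hm1 : 1 < m) (hs : Sol N m α b ψ ψd)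
    {r : ℝ} (h0 : 0 ≤ r) (hrb : r < b) :
    r ^ (N - 1) * ψd r = -∫ τ in (0:ℝ)..r, τ ^ (N - 1) * leF m (ψ τ) := by
  obtain ⟨hψ0, hψd0, hder, hcontd, hode, hpos⟩ := hs
  have hb0 : 0 < b := lt_of_le_of_lt h0 hrb
  rcases eq_or_lt_of_le h0 with h0' | h0'
  · rw [← h0']
    simp [hψd0]
  obtain ⟨k, rfl⟩ : ∃ k, N = k + 3 := ⟨N - 3, by omega⟩
  have hNsub : k + 3 - 1 = k + 2 := rfl
  have hcast : ((k + 3 : ℕ) : ℝ) - 1 = ((k + 2 : ℕ) : ℝ) := by push_cast; ring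
  simp only [hNsub]
  have hψcont : ContinuousOn ψ (Set.Icc 0 r) := fun x hx =>
    ((hder x hx.1 (lt_of_le_of_lt hx.2 hrb)).continuousAt).continuousWithinAt
  set cl : ℝ → ℝ := fun τ => max 0 (min r τ) with hcl
  have hclcont : Continuous cl := continuous_const.max (continuous_const.min continuous_id)
  have hclmem : ∀ τ, cl τ ∈ Set.Icc 0 r := by
    intro τ
    exact ⟨le_max_left _ _, by simp only [hcl, max_le_iff]; exact ⟨h0, min_le_left _ _⟩⟩
  have hclid : ∀ τ ∈ Set.Icc 0 r, cl τ = τ := by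
    intro τ hτ
    simp only [hcl]
    rw [min_eq_right hτ.2, max_eq_right hτ.1]
  have hψclc : Continuous fun τ => ψ (cl τ) :=
    hψcont.comp_continuous hclcont hclmem
  set gg : ℝ → ℝ := fun τ => τ ^ (k + 2) * leF m (ψ (cl τ)) with hgg
  have hggc : Continuous gg := (continuous_pow _).mul ((leF_cont hm1).comp hψclc)
  have hkey : ∀ s, 0 < s → s ≤ r → HasDerivAt (fun u => u ^ (k + 2) * ψd u) (-gg s) s := by
    intro s hs0 hsr
    have h1 : HasDerivAt (fun u : ℝ => u ^ (k + 2)) (↑(k + 2) * s ^ (k + 1)) s :=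
      hasDerivAt_pow _ _
    have h2 : HasDerivAt ψd (-(((k + 3 : ℕ) : ℝ) - 1) / s * ψd s - leF m (ψ s)) s := by
      have := hode s hs0 (lt_of_le_of_lt hsr hrb)
      convert this using 2
      ring
    have h3 : HasDerivAt (fun u => u ^ (k + 2) * ψd u) _ s := h1.mul h2
    convert h3 using 1
    have hcls : cl s = s := hclid s ⟨hs0.le, hsr⟩
    simp only [hgg, hcls, hcast]
    have hsne : s ≠ 0 := hs0.ne'
    field_simp
    ring
  have hFTC : ∀ ε ∈ Set.Ioo 0 r,
      (∫ s in ε..r, -gg s) = r ^ (k + 2) * ψd r - ε ^ (k + 2) * ψd ε := by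
    intro ε hε
    apply intervalIntegral.integral_eq_sub_of_hasDerivAt
    · intro t ht
      rw [Set.uIcc_of_le hε.2.le] at ht
      exact hkey t (lt_of_lt_of_le hε.1 ht.1) ht.2
    · exact (hggc.neg).intervalIntegrable _ _
  set l : Filter ℝ := 𝓝[Set.Ioo 0 r] 0 with hl
  have hlne : l.NeBot := by
    rw [hl]
    apply mem_closure_iff_nhdsWithin_neBot.mp
    rw [closure_Ioo h0'.ne]
    exact ⟨le_refl 0, h0'.le⟩
  have hlim1 : Tendsto (fun ε => ∫ s in ε..r, -gg s) l (𝓝 (∫ s in (0:ℝ)..r, -gg s)) := by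
    have hc : Continuous fun x => ∫ s in x..r, -gg s := by
      have h1 : Continuous fun x => ∫ s in r..x, -gg s :=
        intervalIntegral.continuous_primitive (fun a b => (hggc.neg).intervalIntegrable a b) r
      have h2 : (fun x => ∫ s in x..r, -gg s) = fun x => -∫ s in r..x, -gg s := by
        funext x
        rw [← intervalIntegral.integral_symm]
      rw [h2]
      exact h1.neg
    exact (hc.tendsto 0).mono_left nhdsWithin_le_nhds
  have hlim2 : Tendsto (fun ε => r ^ (k + 2) * ψd r - ε ^ (k + 2) * ψd ε) l
      (𝓝 (r ^ (k + 2) * ψd r)) := by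
    have hψdlim : Tendsto ψd l (𝓝 0) := by
      have h1 : ContinuousWithinAt ψd (Set.Ico 0 b) 0 := hcontd 0 ⟨le_refl 0, hb0⟩
      have h2 : Tendsto ψd (𝓝[Set.Ico 0 b] 0) (𝓝 (ψd 0)) := h1.tendsto
      rw [hψd0] at h2
      exact h2.mono_left (nhdsWithin_mono 0 (fun t ht => ⟨ht.1.le, lt_of_lt_of_le ht.2 hrb.le⟩))
    have hpowlim : Tendsto (fun ε : ℝ => ε ^ (k + 2)) l (𝓝 0) := by
      have := ((continuous_pow (k + 2)).tendsto (0:ℝ)).mono_left (nhdsWithin_le_nhds (s := Set.Ioo 0 r))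
      simpa [zero_pow (by omega : k + 2 ≠ 0)] using this
    have := (hpowlim.mul hψdlim).const_sub (r ^ (k + 2) * ψd r)
    simpa using this
  have heq : (fun ε => ∫ s in ε..r, -gg s) =ᶠ[l]
      fun ε => r ^ (k + 2) * ψd r - ε ^ (k + 2) * ψd ε := by
    filter_upwards [self_mem_nhdsWithin] with ε hε
    exact hFTC ε hε
  have hmain := tendsto_nhds_unique (hlim1.congr' heq) hlim2
  have hunclamp : ∫ s in (0:ℝ)..r, -gg s = -∫ τ in (0:ℝ)..r, τ ^ (k + 2) * leF m (ψ τ) := by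
    rw [intervalIntegral.integral_neg]
    congr 1
    apply intervalIntegral.integral_congr
    intro τ hτ
    rw [Set.uIcc_of_le h0] at hτ
    simp only [hgg]
    rw [hclid τ hτ]
  rw [← hmain, hunclamp]

theorem sol_FTC (hs : Sol N m α b ψ ψd) {x y : ℝ} (hx : 0 ≤ x) (hxy : x ≤ y) (hyb : y < b) :
    ψ y - ψ x = ∫ τ in x..y, ψd τ := by
  obtain ⟨hψ0, hψd0, hder, hcontd, hode, hpos⟩ := hs
  have hInt : IntervalIntegrable ψd volume x y := by
    apply ContinuousOn.intervalIntegrable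
    rw [Set.uIcc_of_le hxy]
    exact hcontd.mono (fun t ht => ⟨le_trans hx ht.1, lt_of_le_of_lt ht.2 hyb⟩)
  rw [intervalIntegral.integral_eq_sub_of_hasDerivAt (fun t ht => ?_) hInt]
  rw [Set.uIcc_of_le hxy] at ht
  exact hder t (le_trans hx ht.1) (lt_of_le_of_lt ht.2 hyb)

theorem sol_psid_nonpos (hs : Sol N m α b ψ ψd) {r : ℝ} (h0 : 0 ≤ r) (hrb : r < b) :
    ψd r ≤ 0 := by
  rcases eq_or_lt_of_le h0 with h0' | h0'
  · rw [← h0', hs.2.1]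
  · exact (hs.2.2.2.2.2 r h0' hrb).2.le

theorem sol_anti (hs : Sol N m α b ψ ψd) {x y : ℝ} (hx : 0 ≤ x) (hxy : x ≤ y) (hyb : y < b) :
    ψ y ≤ ψ x := by
  have h1 := sol_FTC hs hx hxy hyb
  have h2 : 0 ≤ ∫ τ in x..y, -ψd τ := by
    apply intervalIntegral.integral_nonneg hxy
    intro u hu
    have := sol_psid_nonpos hs (le_trans hx hu.1) (lt_of_le_of_lt hu.2 hyb)
    linarith
  rw [intervalIntegral.integral_neg] at h2
  linarith

theorem sol_pos (hα : 0 < α) (hs : Sol N m α b ψ ψd) {r : ℝ} (h0 : 0 ≤ r) (hrb : r < b) :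
    0 < ψ r := by
  rcases eq_or_lt_of_le h0 with h0' | h0'
  · rw [← h0', hs.1]; exact hα
  · exact (hs.2.2.2.2.2 r h0' hrb).1

theorem sol_le_alpha (hs : Sol N m α b ψ ψd) {r : ℝ} (h0 : 0 ≤ r) (hrb : r < b) :
    ψ r ≤ α := by
  have := sol_anti hs (le_refl 0) h0 hrb
  rwa [hs.1] at this

theorem sol_restrict (hs : Sol N m α b ψ ψd) {b' : ℝ} (h : b' ≤ b) : Sol N m α b' ψ ψd := by
  obtain ⟨hψ0, hψd0, hder, hcontd, hode, hpos⟩ := hs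
  exact ⟨hψ0, hψd0, fun r h1 h2 => hder r h1 (lt_of_lt_of_le h2 h),
    hcontd.mono (Set.Ico_subset_Ico_right h),
    fun r h1 h2 => hode r h1 (lt_of_lt_of_le h2 h),
    fun r h1 h2 => hpos r h1 (lt_of_lt_of_le h2 h)⟩

end LaneEmdenAux3

section LaneEmdenAux4
variable {N : ℕ} {m α : ℝ}

theorem sol_unique (hN : 3 ≤ N) (hm1 : 1 < m) (hα : 0 < α)
    {b₁ b₂ : ℝ} {ψ₁ ψd₁ ψ₂ ψd₂ : ℝ → ℝ}
    (h1 : Sol N m α b₁ ψ₁ ψd₁) (h2 : Sol N m α b₂ ψ₂ ψd₂)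
    {r : ℝ} (h0 : 0 ≤ r) (hr1 : r < b₁) (hr2 : r < b₂) : ψ₁ r = ψ₂ r := by
  have hc1 : ContinuousOn ψ₁ (Set.Icc 0 r) := sol_contOn h1 hr1
  have hc2 : ContinuousOn ψ₂ (Set.Icc 0 r) := sol_contOn h2 hr2
  have hne0 : (Set.Icc (0:ℝ) r).Nonempty := ⟨0, le_refl 0, h0⟩
  obtain ⟨x₁, hx₁, hmin₁⟩ := isCompact_Icc.exists_isMinOn hne0 hc1
  obtain ⟨x₂, hx₂, hmin₂⟩ := isCompact_Icc.exists_isMinOn hne0 hc2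
  set δ := min (ψ₁ x₁) (ψ₂ x₂) with hδ
  have hδ0 : 0 < δ := lt_min (sol_pos hα h1 hx₁.1 (lt_of_le_of_lt hx₁.2 hr1))
    (sol_pos hα h2 hx₂.1 (lt_of_le_of_lt hx₂.2 hr2))
  have hlb1 : ∀ s ∈ Set.Icc 0 r, δ ≤ ψ₁ s := fun s hs =>
    le_trans (min_le_left _ _) (isMinOn_iff.mp hmin₁ s hs)
  have hlb2 : ∀ s ∈ Set.Icc 0 r, δ ≤ ψ₂ s := fun s hs =>
    le_trans (min_le_right _ _) (isMinOn_iff.mp hmin₂ s hs)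
  have hub1 : ∀ s ∈ Set.Icc 0 r, ψ₁ s ≤ α := fun s hs =>
    sol_le_alpha h1 hs.1 (lt_of_le_of_lt hs.2 hr1)
  have hub2 : ∀ s ∈ Set.Icc 0 r, ψ₂ s ≤ α := fun s hs =>
    sol_le_alpha h2 hs.1 (lt_of_le_of_lt hs.2 hr2)
  have hmem1 : ∀ s ∈ Set.Icc 0 r, ψ₁ s ∈ Set.Icc δ α := fun s hs => ⟨hlb1 s hs, hub1 s hs⟩
  have hmem2 : ∀ s ∈ Set.Icc 0 r, ψ₂ s ∈ Set.Icc δ α := fun s hs => ⟨hlb2 s hs, hub2 s hs⟩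
  obtain ⟨K, hK0, hKf⟩ := leF_lip hm1 (lo := δ) (hi := α) hδ0
  set η := min 1 (1 / (2 * K + 1)) with hη
  have hη0 : 0 < η := lt_min one_pos (by positivity)
  have hη1 : η ≤ 1 := min_le_left _ _
  have hηK : K * η ≤ 2⁻¹ := by
    have h1' : η ≤ 1 / (2 * K + 1) := min_le_right _ _
    rw [div_eq_inv_mul, mul_one] at h1'
    have h2' : K * η ≤ K * (2 * K + 1)⁻¹ := mul_le_mul_of_nonneg_left h1' hK0
    have h3' : K * (2 * K + 1)⁻¹ ≤ 2⁻¹ := by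
      rw [mul_inv_le_iff₀ (by positivity)]
      nlinarith
    linarith
  -- the agreement set
  set S := {t : ℝ | t ∈ Set.Icc 0 r ∧ ∀ s ∈ Set.Icc 0 t, ψ₁ s = ψ₂ s} with hS
  have h0S : 0 ∈ S := by
    refine ⟨⟨le_refl 0, h0⟩, fun s hs => ?_⟩
    have hs0 : s = 0 := le_antisymm hs.2 hs.1
    rw [hs0, h1.1, h2.1]
  have hSne : S.Nonempty := ⟨0, h0S⟩
  have hbdd : BddAbove S := ⟨r, fun t ht => ht.1.2⟩
  set T := sSup S with hT
  have hT0 : 0 ≤ T := le_csSup hbdd h0S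
  have hTr : T ≤ r := csSup_le hSne fun t ht => ht.1.2
  have hTS : T ∈ S := by
    refine ⟨⟨hT0, hTr⟩, fun s hs => ?_⟩
    rcases lt_or_eq_of_le hs.2 with hlt | heq
    · obtain ⟨t, htS, hst⟩ := exists_lt_of_lt_csSup hSne hlt
      exact htS.2 s ⟨hs.1, hst.le⟩
    · rcases eq_or_lt_of_le hT0 with hT00 | hT0'
      · have hseq : s = 0 := by rw [heq, ← hT00]
        rw [hseq, h1.1, h2.1]
      · rw [heq]
        have hlT : (𝓝[Set.Ioo 0 T] T).NeBot := by
          apply mem_closure_iff_nhdsWithin_neBot.mp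
          rw [closure_Ioo hT0'.ne]
          exact ⟨hT0'.le, le_refl T⟩
        have hcc1 : ContinuousAt ψ₁ T := sol_contAt h1 hT0 (lt_of_le_of_lt hTr hr1)
        have hcc2 : ContinuousAt ψ₂ T := sol_contAt h2 hT0 (lt_of_le_of_lt hTr hr2)
        have he : ψ₁ =ᶠ[𝓝[Set.Ioo 0 T] T] ψ₂ := by
          filter_upwards [self_mem_nhdsWithin] with u hu
          obtain ⟨t, htS, hut⟩ := exists_lt_of_lt_csSup hSne hu.2
          exact htS.2 u ⟨hu.1.le, hut.le⟩
        have ht1 : Tendsto ψ₁ (𝓝[Set.Ioo 0 T] T) (𝓝 (ψ₁ T)) :=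
          hcc1.tendsto.mono_left nhdsWithin_le_nhds
        have ht2 : Tendsto ψ₂ (𝓝[Set.Ioo 0 T] T) (𝓝 (ψ₂ T)) :=
          hcc2.tendsto.mono_left nhdsWithin_le_nhds
        exact tendsto_nhds_unique (ht1.congr' he) ht2
  rcases eq_or_lt_of_le hTr with hTr' | hTr'
  · exact hTS.2 r ⟨h0, le_of_eq hTr'.symm⟩
  exfalso
  set t₁ := min (T + η) r with ht₁def
  have hTt₁ : T < t₁ := lt_min (by linarith) hTr'
  have ht₁r : t₁ ≤ r := min_le_right _ _
  have ht₁0 : 0 ≤ t₁ := le_trans hT0 hTt₁.le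
  have ht₁η : t₁ - T ≤ η := by
    have := min_le_left (T + η) r
    rw [ht₁def]; linarith [min_le_left (T + η) r]
  set D := fun s => |ψ₁ s - ψ₂ s| with hD
  have hsub : Set.Icc T t₁ ⊆ Set.Icc 0 r := fun s hs => ⟨le_trans hT0 hs.1, le_trans hs.2 ht₁r⟩
  have hDc : ContinuousOn D (Set.Icc T t₁) :=
    (((hc1.mono hsub).sub (hc2.mono hsub))).abs
  set U := sSup (D '' Set.Icc T t₁) with hU
  have himg : IsCompact (D '' Set.Icc T t₁) := isCompact_Icc.image_of_continuousOn hDc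
  have hUbdd : BddAbove (D '' Set.Icc T t₁) := himg.bddAbove
  have hUne : (D '' Set.Icc T t₁).Nonempty :=
    ⟨D T, Set.mem_image_of_mem _ ⟨le_refl T, hTt₁.le⟩⟩
  have hDU : ∀ s ∈ Set.Icc T t₁, D s ≤ U := fun s hs =>
    le_csSup hUbdd (Set.mem_image_of_mem _ hs)
  have hU0 : 0 ≤ U := le_trans (abs_nonneg _) (hDU T ⟨le_refl T, hTt₁.le⟩)
  -- bound on the difference of the derivatives
  have hψdd : ∀ s ∈ Set.Icc T t₁, |ψd₁ s - ψd₂ s| ≤ K * U * (s - T) := by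
    intro s hs
    have hs0 : 0 ≤ s := le_trans hT0 hs.1
    have hsr : s ≤ r := le_trans hs.2 ht₁r
    have hsb1 : s < b₁ := lt_of_le_of_lt hsr hr1
    have hsb2 : s < b₂ := lt_of_le_of_lt hsr hr2
    rcases eq_or_lt_of_le hs0 with hs0' | hs0'
    · have hTeq : T = 0 := le_antisymm (by rw [hs0']; exact hs.1) hT0
      rw [← hs0', h1.2.1, h2.2.1, hTeq]
      simp
    set g₁ := fun τ : ℝ => τ ^ (N - 1) * leF m (ψ₁ τ) with hg₁
    set g₂ := fun τ : ℝ => τ ^ (N - 1) * leF m (ψ₂ τ) with hg₂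
    have hgc1 : ContinuousOn g₁ (Set.Icc 0 r) :=
      (continuous_pow _).continuousOn.mul ((leF_cont hm1).comp_continuousOn hc1)
    have hgc2 : ContinuousOn g₂ (Set.Icc 0 r) :=
      (continuous_pow _).continuousOn.mul ((leF_cont hm1).comp_continuousOn hc2)
    have hint : ∀ (g : ℝ → ℝ), ContinuousOn g (Set.Icc 0 r) → ∀ x y, 0 ≤ x → x ≤ y → y ≤ r →
        IntervalIntegrable g volume x y := by
      intro g hg x y hx hxy hyr
      apply ContinuousOn.intervalIntegrable
      rw [Set.uIcc_of_le hxy]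
      exact hg.mono fun t ht => ⟨le_trans hx ht.1, le_trans ht.2 hyr⟩
    have hid1 := sol_identity hN hm1 h1 hs0 hsb1
    have hid2 := sol_identity hN hm1 h2 hs0 hsb2
    have hcongrT : (∫ τ in (0:ℝ)..T, g₁ τ) = ∫ τ in (0:ℝ)..T, g₂ τ := by
      apply intervalIntegral.integral_congr
      intro τ hτ
      rw [Set.uIcc_of_le hT0] at hτ
      simp only [hg₁, hg₂]
      rw [hTS.2 τ hτ]
    have hsplit1 : (∫ τ in (0:ℝ)..s, g₁ τ) = (∫ τ in (0:ℝ)..T, g₁ τ) + ∫ τ in T..s, g₁ τ :=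
      (intervalIntegral.integral_add_adjacent_intervals
        (hint g₁ hgc1 0 T (le_refl 0) hT0 hTr)
        (hint g₁ hgc1 T s hT0 hs.1 hsr)).symm
    have hsplit2 : (∫ τ in (0:ℝ)..s, g₂ τ) = (∫ τ in (0:ℝ)..T, g₂ τ) + ∫ τ in T..s, g₂ τ :=
      (intervalIntegral.integral_add_adjacent_intervals
        (hint g₂ hgc2 0 T (le_refl 0) hT0 hTr)
        (hint g₂ hgc2 T s hT0 hs.1 hsr)).symm
    have hkey : s ^ (N - 1) * (ψd₁ s - ψd₂ s) = -∫ τ in T..s, (g₁ τ - g₂ τ) := by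
      rw [intervalIntegral.integral_sub (hint g₁ hgc1 T s hT0 hs.1 hsr)
        (hint g₂ hgc2 T s hT0 hs.1 hsr)]
      have e1 : s ^ (N - 1) * (ψd₁ s - ψd₂ s)
          = s ^ (N - 1) * ψd₁ s - s ^ (N - 1) * ψd₂ s := by ring
      rw [e1, hid1, hid2, hsplit1, hsplit2, hcongrT]
      ring
    have hbnd : ∀ τ ∈ Set.uIoc T s, ‖g₁ τ - g₂ τ‖ ≤ s ^ (N - 1) * (K * U) := by
      intro τ hτ
      rw [Set.uIoc_of_le hs.1] at hτ
      have hτ0 : 0 ≤ τ := le_trans hT0 hτ.1.le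
      have hτr : τ ∈ Set.Icc 0 r := ⟨hτ0, le_trans hτ.2 hsr⟩
      have hτT : τ ∈ Set.Icc T t₁ := ⟨hτ.1.le, le_trans hτ.2 hs.2⟩
      have e2 : g₁ τ - g₂ τ = τ ^ (N - 1) * (leF m (ψ₁ τ) - leF m (ψ₂ τ)) := by
        simp only [hg₁, hg₂]; ring
      rw [Real.norm_eq_abs, e2, abs_mul, abs_pow, abs_of_nonneg hτ0]
      apply mul_le_mul (pow_le_pow_left₀ hτ0 hτ.2 _)
      · calc |leF m (ψ₁ τ) - leF m (ψ₂ τ)| ≤ K * |ψ₁ τ - ψ₂ τ| :=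
              hKf _ (hmem1 τ hτr) _ (hmem2 τ hτr)
          _ ≤ K * U := mul_le_mul_of_nonneg_left (hDU τ hτT) hK0
      · exact abs_nonneg _
      · positivity
    have hnorm := intervalIntegral.norm_integral_le_of_norm_le_const hbnd
    rw [Real.norm_eq_abs, abs_of_nonneg (by linarith [hs.1] : (0:ℝ) ≤ s - T)] at hnorm
    have habs : s ^ (N - 1) * |ψd₁ s - ψd₂ s| ≤ s ^ (N - 1) * (K * U * (s - T)) := by
      have e3 : s ^ (N - 1) * |ψd₁ s - ψd₂ s| = |s ^ (N - 1) * (ψd₁ s - ψd₂ s)| := by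
        rw [abs_mul, abs_pow, abs_of_nonneg hs0]
      rw [e3, hkey, abs_neg]
      calc |∫ τ in T..s, (g₁ τ - g₂ τ)| ≤ s ^ (N - 1) * (K * U) * (s - T) := hnorm
        _ = s ^ (N - 1) * (K * U * (s - T)) := by ring
    exact le_of_mul_le_mul_left habs (pow_pos hs0' _)
  -- bound on the difference of ψ values
  have hDhalf : ∀ t ∈ Set.Icc T t₁, D t ≤ 2⁻¹ * U := by
    intro t ht
    have ht0 : 0 ≤ t := le_trans hT0 ht.1
    have htr : t ≤ r := le_trans ht.2 ht₁r
    have hFTC1 := sol_FTC h1 hT0 ht.1 (lt_of_le_of_lt htr hr1)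
    have hFTC2 := sol_FTC h2 hT0 ht.1 (lt_of_le_of_lt htr hr2)
    have hψT : ψ₁ T = ψ₂ T := hTS.2 T ⟨hT0, le_refl T⟩
    have hint1 : IntervalIntegrable ψd₁ volume T t := by
      apply ContinuousOn.intervalIntegrable
      rw [Set.uIcc_of_le ht.1]
      exact h1.2.2.2.1.mono fun u hu =>
        ⟨le_trans hT0 hu.1, lt_of_le_of_lt (le_trans hu.2 htr) hr1⟩
    have hint2 : IntervalIntegrable ψd₂ volume T t := by
      apply ContinuousOn.intervalIntegrable
      rw [Set.uIcc_of_le ht.1]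
      exact h2.2.2.2.1.mono fun u hu =>
        ⟨le_trans hT0 hu.1, lt_of_le_of_lt (le_trans hu.2 htr) hr2⟩
    have hdiff : ψ₁ t - ψ₂ t = ∫ τ in T..t, (ψd₁ τ - ψd₂ τ) := by
      rw [intervalIntegral.integral_sub hint1 hint2]
      linarith
    have hbnd : ∀ τ ∈ Set.uIoc T t, ‖ψd₁ τ - ψd₂ τ‖ ≤ K * U * η := by
      intro τ hτ
      rw [Set.uIoc_of_le ht.1] at hτ
      have hτm : τ ∈ Set.Icc T t₁ := ⟨hτ.1.le, le_trans hτ.2 ht.2⟩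
      rw [Real.norm_eq_abs]
      calc |ψd₁ τ - ψd₂ τ| ≤ K * U * (τ - T) := hψdd τ hτm
        _ ≤ K * U * η := by
            apply mul_le_mul_of_nonneg_left _ (by positivity)
            have : τ ≤ t₁ := le_trans hτ.2 ht.2
            linarith [ht₁η]
    have hnorm := intervalIntegral.norm_integral_le_of_norm_le_const hbnd
    rw [Real.norm_eq_abs, abs_of_nonneg (by linarith [ht.1] : (0:ℝ) ≤ t - T)] at hnorm
    rw [hD]
    calc |ψ₁ t - ψ₂ t| = |∫ τ in T..t, (ψd₁ τ - ψd₂ τ)| := by rw [hdiff]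
      _ ≤ K * U * η * (t - T) := hnorm
      _ ≤ K * U * η * η := by
          apply mul_le_mul_of_nonneg_left _ (by positivity)
          linarith [ht₁η, ht.2]
      _ = (K * η) * η * U := by ring
      _ ≤ 2⁻¹ * 1 * U := by
          apply mul_le_mul_of_nonneg_right _ hU0
          apply mul_le_mul hηK hη1 hη0.le (by norm_num)
      _ = 2⁻¹ * U := by ring
  have hU2 : U ≤ 2⁻¹ * U := by
    apply csSup_le hUne
    rintro _ ⟨s, hs, rfl⟩
    exact hDhalf s hs
  have hU00 : U = 0 := by linarith
  have ht₁S : t₁ ∈ S := by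
    refine ⟨⟨ht₁0, ht₁r⟩, fun s hs => ?_⟩
    rcases le_total s T with h | h
    · exact hTS.2 s ⟨hs.1, h⟩
    · have hDs : D s ≤ U := hDU s ⟨h, hs.2⟩
      rw [hU00] at hDs
      have : |ψ₁ s - ψ₂ s| = 0 := le_antisymm hDs (abs_nonneg _)
      have := abs_eq_zero.mp this
      linarith [this]
  have := le_csSup hbdd ht₁S
  linarith

theorem sol_unique_d (hN : 3 ≤ N) (hm1 : 1 < m) (hα : 0 < α)
    {b₁ b₂ : ℝ} {ψ₁ ψd₁ ψ₂ ψd₂ : ℝ → ℝ}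
    (h1 : Sol N m α b₁ ψ₁ ψd₁) (h2 : Sol N m α b₂ ψ₂ ψd₂)
    {r : ℝ} (h0 : 0 ≤ r) (hr1 : r < b₁) (hr2 : r < b₂) : ψd₁ r = ψd₂ r := by
  rcases eq_or_lt_of_le h0 with h0' | h0'
  · rw [← h0', h1.2.1, h2.2.1]
  have hid1 := sol_identity hN hm1 h1 h0 hr1
  have hid2 := sol_identity hN hm1 h2 h0 hr2
  have hcongr : (∫ τ in (0:ℝ)..r, τ ^ (N - 1) * leF m (ψ₁ τ))
      = ∫ τ in (0:ℝ)..r, τ ^ (N - 1) * leF m (ψ₂ τ) := by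
    apply intervalIntegral.integral_congr
    intro τ hτ
    rw [Set.uIcc_of_le h0] at hτ
    show τ ^ (N - 1) * leF m (ψ₁ τ) = τ ^ (N - 1) * leF m (ψ₂ τ)
    rw [sol_unique hN hm1 hα h1 h2 hτ.1 (lt_of_le_of_lt hτ.2 hr1) (lt_of_le_of_lt hτ.2 hr2)]
  have : r ^ (N - 1) * ψd₁ r = r ^ (N - 1) * ψd₂ r := by
    rw [hid1, hid2, hcongr]
  exact mul_left_cancel₀ (pow_ne_zero _ h0'.ne') this

set_option maxHeartbeats 1600000 in
theorem sol_local (hN : 3 ≤ N) (hm1 : 1 < m) (hα : 0 < α) :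
    ∃ b, 0 < b ∧ ∃ ψ ψd, Sol N m α b ψ ψd := by
  obtain ⟨K, hK0, hKf⟩ := leF_lip hm1 (lo := α / 2) (hi := α + α / 2) (by positivity)
  set M := leF m (α + α / 2) with hMdef
  have hM0 : 0 < M := leF_pos hm1 (by positivity)
  have hM : ∀ x ∈ Set.Icc (α / 2) (α + α / 2), |leF m x| ≤ M := by
    intro x hx
    rw [abs_of_nonneg (leF_nonneg hm1 (by linarith [hx.1]))]
    exact leF_mono hm1 (by linarith [hx.1]) hx.2
  set a := min (min 1 (α / (2 * (M + 1)))) (1 / (2 * (K + 1))) with hadef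
  have ha0 : 0 < a := lt_min (lt_min one_pos (by positivity)) (by positivity)
  have ha1 : a ≤ 1 := le_trans (min_le_left _ _) (min_le_left _ _)
  have haM : a ≤ α / (2 * (M + 1)) := le_trans (min_le_left _ _) (min_le_right _ _)
  have haK : a ≤ 1 / (2 * (K + 1)) := min_le_right _ _
  obtain ⟨ψ, ψd, hn1, hn2, hn3, hn4, hn5, hn6, hn7, hn8, hn9⟩ :=
    contraction_step (N := N) hN hm1 (r₀ := 0) (a := a) (ψ₀ := α) (c₀ := 0) (ρ := α / 2)
      (lo := α / 2) (hi := α + α / 2) (M := M) (K := K) (H := M * a)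
      (le_refl 0) ha0 (Or.inr rfl) (le_refl 0) (by positivity) (by positivity)
      (by linarith) (by linarith) hM hK0 hKf
      (by
        intro s hs
        simp only [abs_zero, mul_zero, zero_add, sub_zero]
        have := hs.2
        rw [zero_add] at this
        nlinarith [hM0, hs.1])
      (by
        have h1 : M * a * a ≤ M * a := by nlinarith [mul_le_mul_of_nonneg_left ha1 (mul_pos hM0 ha0).le]
        have h2 : M * a ≤ M * (α / (2 * (M + 1))) := mul_le_mul_of_nonneg_left haM hM0.le
        have h3 : M * (α / (2 * (M + 1))) ≤ α / 2 := by
          rw [← mul_div_assoc, div_le_div_iff₀ (by positivity) (by norm_num)]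
          nlinarith
        linarith)
      (by
        have h1 : K * a ^ 2 ≤ K * a := by nlinarith [mul_le_mul_of_nonneg_left ha1 (mul_nonneg hK0 ha0.le)]
        have h2 : K * a ≤ K * (1 / (2 * (K + 1))) := mul_le_mul_of_nonneg_left haK hK0
        have h3 : K * (1 / (2 * (K + 1))) ≤ 2⁻¹ := by
          rw [mul_one_div, div_le_iff₀ (by positivity)]
          nlinarith
        linarith)
  refine ⟨a, ha0, ψ, ψd, hn1, ?_, ?_, ?_, ?_, ?_⟩
  · rw [hn9]; simp
  · intro r h0 hra
    exact hn3 r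
  · exact hn4.continuousOn
  · intro r h0 hra
    exact hn6 r ⟨h0, by rwa [zero_add]⟩
  · intro r h0 hra
    constructor
    · have := (hn2 r ⟨h0.le, by rw [zero_add]; exact hra.le⟩).1
      linarith
    · exact hn8 r ⟨h0, by rw [zero_add]; exact hra.le⟩

set_option maxHeartbeats 1600000 in
theorem sol_extend (hN : 3 ≤ N) (hm1 : 1 < m) (hα : 0 < α)
    {b δ : ℝ} {ψ ψd : ℝ → ℝ} (hb : 0 < b) (hs : Sol N m α b ψ ψd)
    (hδ0 : 0 < δ) (hδ : ∀ r, 0 ≤ r → r < b → δ ≤ ψ r) :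
    ∃ b', b < b' ∧ ∃ ψ' ψd', Sol N m α b' ψ' ψd' := by
  have hδα : δ ≤ α := by have h := hδ 0 le_rfl hb; rwa [hs.1] at h
  set M₀ := leF m α with hM₀def
  have hM₀0 : 0 < M₀ := leF_pos hm1 hα
  set gψ := fun τ : ℝ => τ ^ (N - 1) * leF m (ψ τ) with hgψ
  have hgψc : ∀ {y : ℝ}, y < b → ContinuousOn gψ (Set.Icc 0 y) := fun {y} hy =>
    (continuous_pow _).continuousOn.mul ((leF_cont hm1).comp_continuousOn (sol_contOn hs hy))
  have hgint : ∀ x y, 0 ≤ x → x ≤ y → y < b → IntervalIntegrable gψ volume x y := by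
    intro x y hx hxy hyb
    apply ContinuousOn.intervalIntegrable
    rw [Set.uIcc_of_le hxy]
    exact (hgψc hyb).mono fun t ht => ⟨le_trans hx ht.1, ht.2⟩
  have hgψnn : ∀ τ, 0 ≤ τ → τ < b → 0 ≤ gψ τ := fun τ h1 h2 =>
    mul_nonneg (pow_nonneg h1 _) (leF_nonneg hm1 (sol_pos hα hs h1 h2).le)
  -- bound |ψd r| ≤ M₀ * b on [0, b)
  have hψdb : ∀ r, 0 ≤ r → r < b → |ψd r| ≤ M₀ * b := by
    intro r h1 h2
    rcases eq_or_lt_of_le h1 with h1' | h1'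
    · rw [← h1', hs.2.1, abs_zero]; positivity
    have hid := sol_identity hN hm1 hs h1 h2
    have hbnd : ∀ τ ∈ Set.uIoc 0 r, ‖gψ τ‖ ≤ r ^ (N - 1) * M₀ := by
      intro τ hτ
      rw [Set.uIoc_of_le h1] at hτ
      have hτ0 : 0 ≤ τ := hτ.1.le
      rw [Real.norm_eq_abs, hgψ, abs_mul, abs_pow, abs_of_nonneg hτ0,
        abs_of_nonneg (leF_nonneg hm1 (sol_pos hα hs hτ0 (lt_of_le_of_lt hτ.2 h2)).le)]
      apply mul_le_mul (pow_le_pow_left₀ hτ0 hτ.2 _)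
        (leF_mono hm1 (sol_pos hα hs hτ0 (lt_of_le_of_lt hτ.2 h2)).le
          (sol_le_alpha hs hτ0 (lt_of_le_of_lt hτ.2 h2)))
        (leF_nonneg hm1 (sol_pos hα hs hτ0 (lt_of_le_of_lt hτ.2 h2)).le) (by positivity)
    have hnorm := intervalIntegral.norm_integral_le_of_norm_le_const hbnd
    rw [Real.norm_eq_abs, sub_zero, abs_of_nonneg h1] at hnorm
    have habs : r ^ (N - 1) * |ψd r| ≤ r ^ (N - 1) * (M₀ * b) := by
      have e3 : r ^ (N - 1) * |ψd r| = |r ^ (N - 1) * ψd r| := by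
        rw [abs_mul, abs_pow, abs_of_nonneg h1]
      rw [e3, hid, abs_neg]
      calc |∫ τ in (0:ℝ)..r, gψ τ| ≤ r ^ (N - 1) * M₀ * r := hnorm
        _ = r ^ (N - 1) * (M₀ * r) := by ring
        _ ≤ r ^ (N - 1) * (M₀ * b) := by
            apply mul_le_mul_of_nonneg_left _ (pow_nonneg h1 _)
            nlinarith
    exact le_of_mul_le_mul_left habs (pow_pos h1' _)
  -- uniform negativity κ of ψd on [b/2, b)
  set I0 := ∫ τ in (0:ℝ)..(b / 2), gψ τ with hI0def
  have hI0 : 0 < I0 := by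
    apply intervalIntegral.intervalIntegral_pos_of_pos_on
      (hgint 0 (b / 2) le_rfl (by linarith) (by linarith))
    · intro τ hτ
      exact mul_pos (pow_pos hτ.1 _) (leF_pos hm1 (sol_pos hα hs hτ.1.le (by linarith [hτ.2])))
    · linarith
  set κ := (b ^ (N - 1))⁻¹ * I0 with hκdef
  have hκ0 : 0 < κ := by
    apply mul_pos (inv_pos.2 (pow_pos hb _)) hI0
  have hψdκ : ∀ r, b / 2 ≤ r → r < b → ψd r ≤ -κ := by
    intro r hr1 hr2
    have h0r : 0 ≤ r := le_trans (by positivity) hr1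
    have hrpos : 0 < r := lt_of_lt_of_le (by positivity) hr1
    have hid := sol_identity hN hm1 hs h0r hr2
    have hsplit : (∫ τ in (0:ℝ)..r, gψ τ)
        = (∫ τ in (0:ℝ)..(b / 2), gψ τ) + ∫ τ in (b / 2)..r, gψ τ :=
      (intervalIntegral.integral_add_adjacent_intervals
        (hgint 0 (b / 2) le_rfl (by linarith) (by linarith))
        (hgint (b / 2) r (by positivity) hr1 hr2)).symm
    have h2 : 0 ≤ ∫ τ in (b / 2)..r, gψ τ := by
      apply intervalIntegral.integral_nonneg hr1
      intro u hu
      exact hgψnn u (le_trans (by positivity) hu.1) (lt_of_le_of_lt hu.2 hr2)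
    have h3 : r ^ (N - 1) * ψd r ≤ -I0 := by
      rw [hid, hsplit]
      have : (∫ τ in (0:ℝ)..(b/2), gψ τ) = I0 := rfl
      linarith
    have hrp : 0 < r ^ (N - 1) := pow_pos hrpos _
    have h4 : ψd r ≤ -I0 / r ^ (N - 1) := by
      rw [le_div_iff₀ hrp]
      linarith [h3]
    have hpow : r ^ (N - 1) ≤ b ^ (N - 1) := pow_le_pow_left₀ h0r hr2.le _
    have hinv : (b ^ (N - 1))⁻¹ ≤ (r ^ (N - 1))⁻¹ := by
      apply inv_anti₀ hrp hpow
    have h5 : -I0 / r ^ (N - 1) ≤ -κ := by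
      rw [hκdef, div_eq_mul_inv, neg_mul]
      apply neg_le_neg
      calc (b ^ (N - 1))⁻¹ * I0 = I0 * (b ^ (N - 1))⁻¹ := by ring
        _ ≤ I0 * (r ^ (N - 1))⁻¹ := mul_le_mul_of_nonneg_left hinv hI0.le
    linarith
  -- constants for contraction around r₀ near b
  obtain ⟨K, hK0, hKf⟩ := leF_lip hm1 (lo := δ / 2) (hi := α + δ) (by positivity)
  set M := leF m (α + δ) with hMdef
  have hM0 : 0 < M := leF_pos hm1 (by positivity)
  have hM : ∀ x ∈ Set.Icc (δ / 2) (α + δ), |leF m x| ≤ M := by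
    intro x hx
    rw [abs_of_nonneg (leF_nonneg hm1 (by linarith [hx.1]))]
    exact leF_mono hm1 (by linarith [hx.1]) hx.2
  set H0 := ((b / 2) ^ (N - 1))⁻¹ * (b ^ (N - 1) * (M₀ * b)) with hH0def
  have hH00 : 0 ≤ H0 := by positivity
  set ρ := δ / 2 with hρdef
  set H := H0 + M with hHdef
  have hHnn : 0 ≤ H := by positivity
  set a := min (min 1 (b / 2)) (min (ρ / (H + 1)) (1 / (2 * (K + 1)))) with hadef
  have ha0 : 0 < a := lt_min (lt_min one_pos (by positivity)) (lt_min (by positivity) (by positivity))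
  have ha1 : a ≤ 1 := le_trans (min_le_left _ _) (min_le_left _ _)
  have hab2 : a ≤ b / 2 := le_trans (min_le_left _ _) (min_le_right _ _)
  have haH : a ≤ ρ / (H + 1) := le_trans (min_le_right _ _) (min_le_left _ _)
  have haK : a ≤ 1 / (2 * (K + 1)) := le_trans (min_le_right _ _) (min_le_right _ _)
  set r₀ := b - a / 2 with hr₀def
  have hr₀1 : b / 2 ≤ r₀ := by rw [hr₀def]; linarith
  have hr₀b : r₀ < b := by rw [hr₀def]; linarith
  have hr₀0 : 0 < r₀ := lt_of_lt_of_le (by positivity) hr₀1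
  set ψ₀ := ψ r₀ with hψ₀def
  set c₀ := r₀ ^ (N - 1) * ψd r₀ with hc₀def
  have hψdneg : ψd r₀ < 0 := (hs.2.2.2.2.2 r₀ hr₀0 hr₀b).2
  have hc₀neg : c₀ ≤ 0 :=
    mul_nonpos_of_nonneg_of_nonpos (pow_nonneg hr₀0.le _) hψdneg.le
  have hψ₀δ : δ ≤ ψ₀ := hδ r₀ hr₀0.le hr₀b
  have hψ₀α : ψ₀ ≤ α := sol_le_alpha hs hr₀0.le hr₀b
  have hc₀abs : |c₀| ≤ b ^ (N - 1) * (M₀ * b) := by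
    rw [hc₀def, abs_mul, abs_pow, abs_of_nonneg hr₀0.le]
    apply mul_le_mul (pow_le_pow_left₀ hr₀0.le hr₀b.le _) (hψdb r₀ hr₀0.le hr₀b)
      (abs_nonneg _) (by positivity)
  obtain ⟨ψn, ψnd, hn1, hn2, hn3, hn4, hn5, hn6, hn7, hn8, hn9⟩ :=
    contraction_step (N := N) hN hm1 (r₀ := r₀) (a := a) (ψ₀ := ψ₀) (c₀ := c₀) (ρ := ρ)
      (lo := δ / 2) (hi := α + δ) (M := M) (K := K) (H := H)
      hr₀0.le ha0 (Or.inl hr₀0) hc₀neg (by rw [hρdef]; positivity) (by positivity)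
      (by rw [hρdef]; linarith) (by rw [hρdef]; linarith) hM hK0 hKf
      (by
        intro s hsI
        have hs1 : b / 2 ≤ s := le_trans hr₀1 hsI.1
        have hs0 : 0 < s := lt_of_lt_of_le (by positivity) hs1
        have hin1 : (s ^ (N - 1))⁻¹ ≤ ((b / 2) ^ (N - 1))⁻¹ := by
          apply inv_anti₀ (pow_pos (by positivity) _) (pow_le_pow_left₀ (by positivity) hs1 _)
        have h1 : (s ^ (N - 1))⁻¹ * |c₀| ≤ H0 := by
          rw [hH0def]
          apply mul_le_mul hin1 hc₀abs (abs_nonneg _) (by positivity)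
        have h2 : M * (s - r₀) ≤ M := by
          have : s - r₀ ≤ a := by linarith [hsI.2]
          nlinarith
        rw [hHdef]
        exact add_le_add h1 h2)
      (by
        have hρ0 : (0:ℝ) < ρ := by rw [hρdef]; positivity
        have h1 : H * a ≤ H * (ρ / (H + 1)) := mul_le_mul_of_nonneg_left haH hHnn
        have h2 : H * (ρ / (H + 1)) ≤ ρ := by
          rw [← mul_div_assoc, div_le_iff₀ (by positivity)]
          nlinarith
        exact le_trans h1 h2)
      (by
        have h1 : K * a ^ 2 ≤ K * a := by nlinarith [mul_le_mul_of_nonneg_left ha1 (mul_nonneg hK0 ha0.le)]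
        have h2 : K * a ≤ K * (1 / (2 * (K + 1))) := mul_le_mul_of_nonneg_left haK hK0
        have h3 : K * (1 / (2 * (K + 1))) ≤ 2⁻¹ := by
          rw [mul_one_div, div_le_iff₀ (by positivity)]
          nlinarith
        exact le_trans h1 (le_trans h2 h3))
  -- glue the two solutions at r₀
  have hmatch : ψn r₀ = ψ r₀ := hn1
  have hmatchd : ψnd r₀ = ψd r₀ := by
    rw [hn9, hc₀def, inv_mul_cancel_left₀ (pow_ne_zero _ hr₀0.ne')]
  set b' := r₀ + a with hb'def
  have hbb' : b < b' := by rw [hb'def, hr₀def]; linarith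
  set Ψ := fun r => if r ≤ r₀ then ψ r else ψn r with hΨ
  set Ψd := fun r => if r ≤ r₀ then ψd r else ψnd r with hΨd
  have hΨeq1 : ∀ y, y ≤ r₀ → Ψ y = ψ y := by intro y hy; rw [hΨ]; simp [hy]
  have hΨeq2 : ∀ y, r₀ ≤ y → Ψ y = ψn y := by
    intro y hy
    rcases eq_or_lt_of_le hy with h | h
    · rw [hΨ, ← h]; simp [hmatch]
    · rw [hΨ]; simp [not_le.mpr h]
  have hΨdeq1 : ∀ y, y ≤ r₀ → Ψd y = ψd y := by intro y hy; rw [hΨd]; simp [hy]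
  have hΨdeq2 : ∀ y, r₀ ≤ y → Ψd y = ψnd y := by
    intro y hy
    rcases eq_or_lt_of_le hy with h | h
    · rw [hΨd, ← h]; simp [hmatchd]
    · rw [hΨd]; simp [not_le.mpr h]
  have hρ0 : (0:ℝ) < ρ := by rw [hρdef]; positivity
  -- first derivative everywhere on [0, b')
  have hD1 : ∀ r, 0 ≤ r → r < b' → HasDerivAt Ψ (Ψd r) r := by
    intro r h0r hrb'
    rcases lt_trichotomy r r₀ with hlt | heq | hgt
    · have hloc : Ψ =ᶠ[𝓝 r] ψ := by
        filter_upwards [Iio_mem_nhds hlt] with y hy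
        exact hΨeq1 y hy.le
      rw [hΨdeq1 r hlt.le]
      exact (hs.2.2.1 r h0r (lt_trans hlt hr₀b)).congr_of_eventuallyEq hloc
    · subst heq
      rw [hΨdeq1 r₀ le_rfl]
      have hIic : HasDerivWithinAt Ψ (ψd r₀) (Set.Iic r₀) r₀ := by
        apply ((hs.2.2.1 r₀ h0r hr₀b).hasDerivWithinAt).congr
        · intro y hy; exact hΨeq1 y hy
        · exact hΨeq1 r₀ le_rfl
      have hIci : HasDerivWithinAt Ψ (ψd r₀) (Set.Ici r₀) r₀ := by
        have h3' : HasDerivAt ψn (ψnd r₀) r₀ := hn3 r₀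
        rw [← hmatchd]
        apply (h3'.hasDerivWithinAt).congr
        · intro y hy; exact hΨeq2 y hy
        · exact hΨeq2 r₀ le_rfl
      have hu := hIic.union hIci
      rw [Set.Iic_union_Ici] at hu
      exact hu.hasDerivAt (by simp)
    · have hloc : Ψ =ᶠ[𝓝 r] ψn := by
        filter_upwards [Ioi_mem_nhds hgt] with y hy
        exact hΨeq2 y hy.le
      rw [hΨdeq2 r hgt.le]
      exact (hn3 r).congr_of_eventuallyEq hloc
  -- second derivative on (0, b')
  have hD2 : ∀ r, 0 < r → r < b' →
      HasDerivAt Ψd (-(((N : ℝ) - 1) / r) * Ψd r - leF m (Ψ r)) r := by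
    intro r h0r hrb'
    rcases lt_trichotomy r r₀ with hlt | heq | hgt
    · have hloc : Ψd =ᶠ[𝓝 r] ψd := by
        filter_upwards [Iio_mem_nhds hlt] with y hy
        exact hΨdeq1 y hy.le
      rw [hΨdeq1 r hlt.le, hΨeq1 r hlt.le]
      exact (hs.2.2.2.2.1 r h0r (lt_trans hlt hr₀b)).congr_of_eventuallyEq hloc
    · subst heq
      rw [hΨdeq1 r₀ le_rfl, hΨeq1 r₀ le_rfl]
      have hIic : HasDerivWithinAt Ψd (-(((N : ℝ) - 1) / r₀) * ψd r₀ - leF m (ψ r₀))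
          (Set.Iic r₀) r₀ := by
        apply ((hs.2.2.2.2.1 r₀ h0r hr₀b).hasDerivWithinAt).congr
        · intro y hy; exact hΨdeq1 y hy
        · exact hΨdeq1 r₀ le_rfl
      have hIci : HasDerivWithinAt Ψd (-(((N : ℝ) - 1) / r₀) * ψd r₀ - leF m (ψ r₀))
          (Set.Ici r₀) r₀ := by
        have h7 := hn7 h0r
        rw [hmatchd, hmatch] at h7
        apply h7.congr
        · intro y hy; exact hΨdeq2 y hy
        · exact hΨdeq2 r₀ le_rfl
      have hu := hIic.union hIci
      rw [Set.Iic_union_Ici] at hu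
      exact hu.hasDerivAt (by simp)
    · have hloc : Ψd =ᶠ[𝓝 r] ψnd := by
        filter_upwards [Ioi_mem_nhds hgt] with y hy
        exact hΨdeq2 y hy.le
      rw [hΨdeq2 r hgt.le, hΨeq2 r hgt.le]
      exact (hn6 r ⟨hgt, hrb'⟩).congr_of_eventuallyEq hloc
  refine ⟨b', hbb', Ψ, Ψd, ?_, ?_, hD1, ?_, hD2, ?_⟩
  · rw [hΨeq1 0 hr₀0.le]; exact hs.1
  · rw [hΨdeq1 0 hr₀0.le]; exact hs.2.1
  · -- continuity of Ψd on [0, b')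
    intro r hr
    rcases eq_or_lt_of_le hr.1 with h0r | h0r
    · -- r = 0 < r₀ : transfer ψd's continuity
      have h1 : ContinuousWithinAt ψd (Set.Ico 0 b) r := hs.2.2.2.1 r ⟨hr.1, by
        rw [← h0r]; exact hb⟩
      have h2 : ContinuousWithinAt ψd (Set.Ico 0 b') r := by
        apply h1.mono_of_mem_nhdsWithin
        rw [mem_nhdsWithin]
        refine ⟨Set.Iio b, isOpen_Iio, by rw [← h0r]; exact hb, fun y hy => ⟨hy.2.1, hy.1⟩⟩
      apply h2.congr_of_eventuallyEq _ (hΨdeq1 r (by rw [← h0r]; exact hr₀0.le))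
      have : Set.Iio r₀ ∈ 𝓝[Set.Ico 0 b'] r :=
        nhdsWithin_le_nhds (Iio_mem_nhds (by rw [← h0r]; exact hr₀0))
      filter_upwards [this] with y hy
      exact hΨdeq1 y hy.le
    · exact ((hD2 r h0r hr.2).continuousAt).continuousWithinAt
  · -- positivity
    intro r h0r hrb'
    rcases le_or_gt r r₀ with hle | hgt
    · rw [hΨeq1 r hle, hΨdeq1 r hle]
      exact hs.2.2.2.2.2 r h0r (lt_of_le_of_lt hle hr₀b)
    · rw [hΨeq2 r hgt.le, hΨdeq2 r hgt.le]
      constructor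
      · have := (hn2 r ⟨hgt.le, hrb'.le⟩).1
        have : ψ₀ - ρ ≤ ψn r := this
        have hlb : δ / 2 ≤ ψ₀ - ρ := by rw [hρdef]; linarith
        linarith [hδ0]
      · exact hn8 r ⟨hgt, hrb'.le⟩

end LaneEmdenAux4

set_option maxHeartbeats 1600000 in
/-- existence and uniqueness of the maximal positive decreasing solution of
the Lane–Emden problem, vanishing at the boundary of its (maximal) existence interval. -/
theorem laneEmden_existence_uniqueness (N : ℕ) (m α : ℝ)
    (hN : 3 ≤ N) (hm : 2 - 2 / (N : ℝ) < m) (hα : 0 < α) :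
    ∃ (R : ℝ≥0∞) (ψ ψd : ℝ → ℝ), 0 < R ∧
      LaneEmden N m α R ψ ψd ∧ LaneEmdenPos R ψ ψd ∧ LaneEmdenVanish R ψ ∧
      ∀ (R₂ : ℝ≥0∞) (ψ₂ ψ₂d : ℝ → ℝ), 0 < R₂ →
        LaneEmden N m α R₂ ψ₂ ψ₂d → LaneEmdenPos R₂ ψ₂ ψ₂d → LaneEmdenVanish R₂ ψ₂ →
        R₂ = R ∧ ∀ r : ℝ, 0 ≤ r → ENNReal.ofReal r < R → ψ₂ r = ψ r := by
  have hm1 : 1 < m := le_hm1 hN hm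
  classical
  set A := {b : ℝ | 0 < b ∧ ∃ p : (ℝ → ℝ) × (ℝ → ℝ), Sol N m α b p.1 p.2} with hA
  obtain ⟨b₀, hb₀, ψl, ψld, hsol₀⟩ := sol_local hN hm1 hα
  have hb₀A : b₀ ∈ A := ⟨hb₀, ⟨(ψl, ψld), hsol₀⟩⟩
  have hAne : A.Nonempty := ⟨b₀, hb₀A⟩
  set Φ := fun b => Classical.epsilon (fun p : (ℝ → ℝ) × (ℝ → ℝ) => Sol N m α b p.1 p.2) with hΦ
  have hΦs : ∀ b ∈ A, Sol N m α b (Φ b).1 (Φ b).2 := fun b hb => Classical.epsilon_spec hb.2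
  set ψS : ℝ → ℝ :=
    fun r => if h : 0 ≤ r ∧ ∃ b ∈ A, r < b then (Φ h.2.choose).1 r else α with hψS
  set ψdS : ℝ → ℝ :=
    fun r => if h : 0 ≤ r ∧ ∃ b ∈ A, r < b then (Φ h.2.choose).2 r else 0 with hψdS
  have hagree : ∀ b ∈ A, ∀ r, 0 ≤ r → r < b → ψS r = (Φ b).1 r ∧ ψdS r = (Φ b).2 r := by
    intro b hbA r h0 hrb
    have hex : 0 ≤ r ∧ ∃ b' ∈ A, r < b' := ⟨h0, b, hbA, hrb⟩
    have hb' := hex.2.choose_spec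
    constructor
    · rw [hψS]
      simp only [dif_pos hex]
      exact sol_unique hN hm1 hα (hΦs _ hb'.1) (hΦs b hbA) h0 hb'.2 hrb
    · rw [hψdS]
      simp only [dif_pos hex]
      exact sol_unique_d hN hm1 hα (hΦs _ hb'.1) (hΦs b hbA) h0 hb'.2 hrb
  have hψSneg : ∀ r : ℝ, r < 0 → ψS r = α := by
    intro r hr
    rw [hψS]
    exact dif_neg fun hcon => absurd hcon.1 (not_le.mpr hr)
  -- ψS, ψdS solve on every interval in A
  have hSolS : ∀ b ∈ A, Sol N m α b ψS ψdS := by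
    intro b hbA
    have hsol := hΦs b hbA
    have hb0 : 0 < b := hbA.1
    have hode : ∀ r, 0 < r → r < b →
        HasDerivAt ψdS (-(((N : ℝ) - 1) / r) * ψdS r - leF m (ψS r)) r := by
      intro r h0 hrb
      have hloc : ψdS =ᶠ[𝓝 r] (Φ b).2 := by
        filter_upwards [isOpen_Ioo.mem_nhds (⟨h0, hrb⟩ : r ∈ Set.Ioo 0 b)] with y hy
        exact (hagree b hbA y hy.1.le hy.2).2
      rw [(hagree b hbA r h0.le hrb).1, (hagree b hbA r h0.le hrb).2]
      exact (hsol.2.2.2.2.1 r h0 hrb).congr_of_eventuallyEq hloc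
    refine ⟨?_, ?_, ?_, ?_, hode, ?_⟩
    · rw [(hagree b hbA 0 le_rfl hb0).1, hsol.1]
    · rw [(hagree b hbA 0 le_rfl hb0).2, hsol.2.1]
    · intro r h0 hrb
      rcases eq_or_lt_of_le h0 with h0' | h0'
      · subst h0'
        rw [(hagree b hbA 0 le_rfl hb0).2, hsol.2.1]
        have hIic : HasDerivWithinAt ψS 0 (Set.Iic 0) 0 := by
          apply ((hasDerivAt_const (0:ℝ) α).hasDerivWithinAt).congr
          · intro y hy
            rcases eq_or_lt_of_le (Set.mem_Iic.mp hy) with h | h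
            · rw [h, (hagree b hbA 0 le_rfl hb0).1, hsol.1]
            · exact hψSneg y h
          · rw [(hagree b hbA 0 le_rfl hb0).1, hsol.1]
        have hIci : HasDerivWithinAt ψS 0 (Set.Ici 0) 0 := by
          have hd := hsol.2.2.1 0 le_rfl hb0
          rw [hsol.2.1] at hd
          have hd2 : HasDerivWithinAt (Φ b).1 0 (Set.Ico 0 b) 0 := hd.hasDerivWithinAt
          have hd3 : HasDerivWithinAt ψS 0 (Set.Ico 0 b) 0 := by
            apply hd2.congr
            · intro y hy; exact (hagree b hbA y hy.1 hy.2).1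
            · exact (hagree b hbA 0 le_rfl hb0).1
          apply hd3.mono_of_mem_nhdsWithin
          rw [mem_nhdsWithin]
          exact ⟨Set.Iio b, isOpen_Iio, hb0, fun y hy => ⟨hy.2, hy.1⟩⟩
        have hu := hIic.union hIci
        rw [Set.Iic_union_Ici] at hu
        exact hu.hasDerivAt (by simp)
      · have hloc : ψS =ᶠ[𝓝 r] (Φ b).1 := by
          filter_upwards [isOpen_Ioo.mem_nhds (⟨h0', hrb⟩ : r ∈ Set.Ioo 0 b)] with y hy
          exact (hagree b hbA y hy.1.le hy.2).1
        rw [(hagree b hbA r h0 hrb).2]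
        exact (hsol.2.2.1 r h0 hrb).congr_of_eventuallyEq hloc
    · intro r hr
      rcases eq_or_lt_of_le hr.1 with h0' | h0'
      · subst h0'
        have h1 : ContinuousWithinAt (Φ b).2 (Set.Ico 0 b) 0 := hsol.2.2.2.1 0 ⟨le_rfl, hb0⟩
        apply h1.congr_of_eventuallyEq _ (hagree b hbA 0 le_rfl hb0).2
        filter_upwards [self_mem_nhdsWithin] with y hy
        exact (hagree b hbA y hy.1 hy.2).2
      · exact ((hode r h0' hr.2).continuousAt).continuousWithinAt
    · intro r h0 hrb
      rw [(hagree b hbA r h0.le hrb).1, (hagree b hbA r h0.le hrb).2]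
      exact hsol.2.2.2.2.2 r h0 hrb
  -- gluing to a supremum radius
  have sol_glue : ∀ c : ℝ, 0 < c →
      (∀ r, 0 ≤ r → r < c → ∃ b ∈ A, r < b) → Sol N m α c ψS ψdS := by
    intro c hc hcov
    obtain ⟨b1, hb1A, h01⟩ := hcov 0 le_rfl hc
    have hs1 := hSolS b1 hb1A
    refine ⟨hs1.1, hs1.2.1, ?_, ?_, ?_, ?_⟩
    · intro r h0 hrb
      obtain ⟨b, hbA, hrb'⟩ := hcov r h0 hrb
      exact (hSolS b hbA).2.2.1 r h0 hrb'
    · intro r hr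
      obtain ⟨b, hbA, hrb'⟩ := hcov r hr.1 hr.2
      have h1 : ContinuousWithinAt ψdS (Set.Ico 0 b) r := (hSolS b hbA).2.2.2.1 r ⟨hr.1, hrb'⟩
      apply h1.mono_of_mem_nhdsWithin
      rw [mem_nhdsWithin]
      exact ⟨Set.Iio b, isOpen_Iio, hrb', fun y hy => ⟨hy.2.1, hy.1⟩⟩
    · intro r h0 hrb
      obtain ⟨b, hbA, hrb'⟩ := hcov r h0.le hrb
      exact (hSolS b hbA).2.2.2.2.1 r h0 hrb'
    · intro r h0 hrb
      obtain ⟨b, hbA, hrb'⟩ := hcov r h0.le hrb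
      exact (hSolS b hbA).2.2.2.2.2 r h0 hrb'
  -- the competitor bridge
  have hbridge : ∀ (R₂ : ℝ≥0∞) (ψ₂ ψ₂d : ℝ → ℝ), LaneEmden N m α R₂ ψ₂ ψ₂d →
      LaneEmdenPos R₂ ψ₂ ψ₂d → ∀ c : ℝ, 0 < c → ENNReal.ofReal c ≤ R₂ →
      Sol N m α c ψ₂ ψ₂d := by
    intro R₂ ψ₂ ψ₂d hLE₂ hPos₂ c hc hcR
    have hlt : ∀ {r : ℝ}, 0 ≤ r → r < c → ENNReal.ofReal r < R₂ := by
      intro r h0 hrc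
      exact lt_of_lt_of_le ((ENNReal.ofReal_lt_ofReal_iff_of_nonneg h0).mpr hrc) hcR
    refine ⟨hLE₂.1, hLE₂.2.1, ?_, ?_, ?_, ?_⟩
    · intro r h0 hrb
      exact hLE₂.2.2.1 r h0 (hlt h0 hrb)
    · exact hLE₂.2.2.2.1.mono fun y hy => ⟨hy.1, hlt hy.1 hy.2⟩
    · intro r h0 hrb
      exact hLE₂.2.2.2.2 r h0 (hlt h0.le hrb)
    · intro r h0 hrb
      exact hPos₂ r h0 (hlt h0.le hrb)
  rcases em (BddAbove A) with hBdd | hBdd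
  · -- bounded case : R = ofReal (sSup A)
    set bs := sSup A with hbs
    have hbsb₀ : b₀ ≤ bs := le_csSup hBdd hb₀A
    have hbs0 : 0 < bs := lt_of_lt_of_le hb₀ hbsb₀
    have hSolbs : Sol N m α bs ψS ψdS :=
      sol_glue bs hbs0 fun r _ hr => exists_lt_of_lt_csSup hAne hr
    set R := ENNReal.ofReal bs with hR
    have hR0 : 0 < R := ENNReal.ofReal_pos.2 hbs0
    have hRtop : R < ⊤ := ENNReal.ofReal_lt_top
    have htoReal : R.toReal = bs := ENNReal.toReal_ofReal hbs0.le
    have hiff : ∀ {r : ℝ}, 0 ≤ r → (ENNReal.ofReal r < R ↔ r < bs) := fun {r} h0 =>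
      ENNReal.ofReal_lt_ofReal_iff_of_nonneg h0
    have hLE : LaneEmden N m α R ψS ψdS := by
      refine ⟨hSolbs.1, hSolbs.2.1, ?_, ?_, ?_⟩
      · intro r h0 hlt
        exact hSolbs.2.2.1 r h0 ((hiff h0).mp hlt)
      · have hset : {r : ℝ | 0 ≤ r ∧ ENNReal.ofReal r < R} = Set.Ico 0 bs := by
          ext r
          simp only [Set.mem_setOf_eq, Set.mem_Ico]
          exact ⟨fun ⟨h0, h1⟩ => ⟨h0, (hiff h0).mp h1⟩, fun ⟨h0, h1⟩ => ⟨h0, (hiff h0).mpr h1⟩⟩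
        rw [hset]
        exact hSolbs.2.2.2.1
      · intro r h0 hlt
        exact hSolbs.2.2.2.2.1 r h0 ((hiff h0.le).mp hlt)
    have hPos : LaneEmdenPos R ψS ψdS := fun r h0 hlt =>
      hSolbs.2.2.2.2.2 r h0 ((hiff h0.le).mp hlt)
    have hVan : LaneEmdenVanish R ψS := by
      intro _
      rw [htoReal]
      set L := sInf (ψS '' Set.Ico 0 bs) with hL
      have himgne : (ψS '' Set.Ico 0 bs).Nonempty :=
        ⟨ψS 0, Set.mem_image_of_mem _ ⟨le_rfl, hbs0⟩⟩
      have hbddb : BddBelow (ψS '' Set.Ico 0 bs) := by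
        refine ⟨0, ?_⟩
        rintro x ⟨r, hr, rfl⟩
        exact (sol_pos hα hSolbs hr.1 hr.2).le
      have hL0 : 0 ≤ L := by
        apply le_csInf himgne
        rintro x ⟨r, hr, rfl⟩
        exact (sol_pos hα hSolbs hr.1 hr.2).le
      have hLle : ∀ r, 0 ≤ r → r < bs → L ≤ ψS r := fun r h0 hr =>
        csInf_le hbddb (Set.mem_image_of_mem _ ⟨h0, hr⟩)
      have hLeq : L = 0 := by
        by_contra hL0'
        have hL0'' : 0 < L := lt_of_le_of_ne hL0 (Ne.symm hL0')
        obtain ⟨b', hbb', ψ', ψd', hs'⟩ :=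
          sol_extend hN hm1 hα hbs0 hSolbs hL0'' fun r h0 hr => hLle r h0 hr
        have hb'A : b' ∈ A := ⟨lt_trans hbs0 hbb', ⟨(ψ', ψd'), hs'⟩⟩
        have := le_csSup hBdd hb'A
        linarith
      rw [Metric.tendsto_nhds]
      intro ε hε
      have hex : ∃ v ∈ ψS '' Set.Ico 0 bs, v < L + ε := exists_lt_of_csInf_lt himgne (by linarith)
      obtain ⟨v, ⟨x₀, hx₀, rfl⟩, hvε⟩ := hex
      rw [hLeq, zero_add] at hvε
      filter_upwards [Ioo_mem_nhdsLT_of_mem (⟨hx₀.2, le_rfl⟩ : bs ∈ Set.Ioc x₀ bs)] with y hy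
      have hy0 : 0 ≤ y := le_trans hx₀.1 hy.1.le
      have hψy : ψS y ≤ ψS x₀ := sol_anti hSolbs hx₀.1 hy.1.le hy.2
      have hψyp : 0 < ψS y := sol_pos hα hSolbs hy0 hy.2
      rw [Real.dist_0_eq_abs, abs_of_pos hψyp]
      linarith
    refine ⟨R, ψS, ψdS, hR0, hLE, hPos, hVan, ?_⟩
    intro R₂ ψ₂ ψ₂d hR₂0 hLE₂ hPos₂ hVan₂
    have hR₂R : R₂ ≤ R := by
      by_contra hcon
      push_neg at hcon
      obtain ⟨q, hq0, hq1, hq2⟩ := ENNReal.lt_iff_exists_real_btwn.mp hcon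
      have hqbs : bs < q := (ENNReal.ofReal_lt_ofReal_iff_of_nonneg hbs0.le).mp hq1
      have hq0' : 0 < q := lt_of_le_of_lt hbs0.le hqbs
      have hqA : q ∈ A := ⟨hq0', ⟨(ψ₂, ψ₂d), hbridge R₂ ψ₂ ψ₂d hLE₂ hPos₂ q hq0' hq2.le⟩⟩
      have := le_csSup hBdd hqA
      linarith
    have hRR₂ : R ≤ R₂ := by
      by_contra hcon
      push_neg at hcon
      have hR₂top : R₂ < ⊤ := lt_trans hcon hRtop
      set b₂ := R₂.toReal with hb₂
      have hb₂0 : 0 < b₂ := ENNReal.toReal_pos hR₂0.ne' hR₂top.ne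
      have hb₂bs : b₂ < bs := by
        have h1 : ENNReal.ofReal b₂ < ENNReal.ofReal bs := by
          rw [hb₂, ENNReal.ofReal_toReal hR₂top.ne]
          exact hcon
        exact (hiff ENNReal.toReal_nonneg).mp h1
      have hS₂ : Sol N m α b₂ ψ₂ ψ₂d :=
        hbridge R₂ ψ₂ ψ₂d hLE₂ hPos₂ b₂ hb₂0 (by rw [hb₂, ENNReal.ofReal_toReal hR₂top.ne])
      have hvan := hVan₂ hR₂top
      have hcontb₂ : ContinuousAt ψS b₂ := sol_contAt hSolbs hb₂0.le hb₂bs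
      have hposb₂ : 0 < ψS b₂ := sol_pos hα hSolbs hb₂0.le hb₂bs
      have heqf : ψ₂ =ᶠ[𝓝[<] b₂] ψS := by
        filter_upwards [Ioo_mem_nhdsLT_of_mem (⟨hb₂0, le_rfl⟩ : b₂ ∈ Set.Ioc 0 b₂)] with y hy
        exact sol_unique hN hm1 hα hS₂ hSolbs hy.1.le hy.2 (lt_trans hy.2 hb₂bs)
      have h1 : Tendsto ψS (𝓝[<] b₂) (𝓝 (ψS b₂)) :=
        hcontb₂.tendsto.mono_left nhdsWithin_le_nhds
      have h2 : Tendsto ψ₂ (𝓝[<] b₂) (𝓝 (ψS b₂)) := h1.congr' heqf.symm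
      have := tendsto_nhds_unique h2 (by rw [← hb₂] at hvan; exact hvan)
      linarith
    have hReq : R₂ = R := le_antisymm hR₂R hRR₂
    refine ⟨hReq, ?_⟩
    intro r h0 hlt
    have hrbs : r < bs := (hiff h0).mp hlt
    have hS₂' : Sol N m α bs ψ₂ ψ₂d :=
      hbridge R₂ ψ₂ ψ₂d hLE₂ hPos₂ bs hbs0 (by rw [hReq])
    exact sol_unique hN hm1 hα hS₂' hSolbs h0 hrbs hrbs
  · -- unbounded case : R = ⊤
    have hcov : ∀ r : ℝ, ∃ b ∈ A, r < b := fun r => not_bddAbove_iff.mp hBdd r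
    have hSolAll : ∀ c : ℝ, 0 < c → Sol N m α c ψS ψdS := fun c hc =>
      sol_glue c hc fun r _ _ => hcov r
    have hSole : ∀ r : ℝ, 0 ≤ r → ∃ c, r < c ∧ Sol N m α c ψS ψdS := by
      intro r h0
      exact ⟨r + 1, lt_add_one r, hSolAll (r + 1) (by linarith)⟩
    have hLE : LaneEmden N m α ⊤ ψS ψdS := by
      have hs1 := hSolAll 1 one_pos
      refine ⟨hs1.1, hs1.2.1, ?_, ?_, ?_⟩
      · intro r h0 _
        obtain ⟨c, hrc, hsc⟩ := hSole r h0
        exact hsc.2.2.1 r h0 hrc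
      · intro r hr
        obtain ⟨c, hrc, hsc⟩ := hSole r hr.1
        have h1 : ContinuousWithinAt ψdS (Set.Ico 0 c) r := hsc.2.2.2.1 r ⟨hr.1, hrc⟩
        apply h1.mono_of_mem_nhdsWithin
        rw [mem_nhdsWithin]
        exact ⟨Set.Iio c, isOpen_Iio, hrc, fun y hy => ⟨hy.2.1, hy.1⟩⟩
      · intro r h0 _
        obtain ⟨c, hrc, hsc⟩ := hSole r h0.le
        exact hsc.2.2.2.2.1 r h0 hrc
    have hPos : LaneEmdenPos ⊤ ψS ψdS := by
      intro r h0 _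
      obtain ⟨c, hrc, hsc⟩ := hSole r h0.le
      exact hsc.2.2.2.2.2 r h0 hrc
    have hVan : LaneEmdenVanish ⊤ ψS := fun h => absurd h (lt_irrefl ⊤)
    refine ⟨⊤, ψS, ψdS, (by simp : (0:ℝ≥0∞) < ⊤), hLE, hPos, hVan, ?_⟩
    intro R₂ ψ₂ ψ₂d hR₂0 hLE₂ hPos₂ hVan₂
    have hR₂eq : R₂ = ⊤ := by
      by_contra hcon
      have hR₂top : R₂ < ⊤ := lt_top_iff_ne_top.mpr hcon
      set b₂ := R₂.toReal with hb₂
      have hb₂0 : 0 < b₂ := ENNReal.toReal_pos hR₂0.ne' hR₂top.ne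
      have hS₂ : Sol N m α b₂ ψ₂ ψ₂d :=
        hbridge R₂ ψ₂ ψ₂d hLE₂ hPos₂ b₂ hb₂0 (by rw [hb₂, ENNReal.ofReal_toReal hR₂top.ne])
      have hvan := hVan₂ hR₂top
      have hSb := hSolAll (b₂ + 1) (by linarith)
      have hcontb₂ : ContinuousAt ψS b₂ := sol_contAt hSb hb₂0.le (lt_add_one b₂)
      have hposb₂ : 0 < ψS b₂ := sol_pos hα hSb hb₂0.le (lt_add_one b₂)
      have heqf : ψ₂ =ᶠ[𝓝[<] b₂] ψS := by
        filter_upwards [Ioo_mem_nhdsLT_of_mem (⟨hb₂0, le_rfl⟩ : b₂ ∈ Set.Ioc 0 b₂)] with y hy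
        exact sol_unique hN hm1 hα hS₂ hSb hy.1.le hy.2 (by linarith [hy.2])
      have h1 : Tendsto ψS (𝓝[<] b₂) (𝓝 (ψS b₂)) :=
        hcontb₂.tendsto.mono_left nhdsWithin_le_nhds
      have h2 : Tendsto ψ₂ (𝓝[<] b₂) (𝓝 (ψS b₂)) := h1.congr' heqf.symm
      have := tendsto_nhds_unique h2 (by rw [← hb₂] at hvan; exact hvan)
      linarith
    refine ⟨hR₂eq, ?_⟩
    intro r h0 _
    have hS₂' : Sol N m α (r + 1) ψ₂ ψ₂d :=
      hbridge R₂ ψ₂ ψ₂d hLE₂ hPos₂ (r + 1) (by linarith) (by rw [hR₂eq]; exact le_top)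
    exact sol_unique hN hm1 hα hS₂' (hSolAll (r + 1) (by linarith)) h0 (lt_add_one r)
      (lt_add_one r)
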